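/- arXiv:1502.05750 — 9 statements merged into one kernel-verified Lean document; each statement's English description precedes it below -/
import Mathlib

section
/- For every prime p ≥ 5, the central binomial-type coefficient satisfies (2p-1 choose p-1) ≡ 1 (mod p³). -/
open Finset


lemma prod_one_add {R : Type*} [CommRing R] (c : R) (hc : c ^ 3 = 0) (b : ℕ → R) (n : ℕ) :
    ∏ k ∈ range n, (1 + c * b k) =
      1 + c * (∑ k ∈ range n, b k) + c ^ 2 * ∑ k ∈ range n, b k * ∑ i ∈ range k, b i := by
  induction n with
  | zero => simp
  | succ n ih =>
      rw [prod_range_succ, ih, sum_range_succ, sum_range_succ]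
      linear_combination (b n * ∑ k ∈ range n, b k * ∑ i ∈ range k, b i) * hc

lemma sq_sum {R : Type*} [CommRing R] (b : ℕ → R) (n : ℕ) :
    (∑ k ∈ range n, b k) ^ 2 =
      (∑ k ∈ range n, b k ^ 2) + 2 * ∑ k ∈ range n, b k * ∑ i ∈ range k, b i := by
  induction n with
  | zero => simp
  | succ n ih =>
      rw [sum_range_succ, sum_range_succ, sum_range_succ]
      linear_combination ih


lemma key_mul_zero {n : ℕ} [NeZero n] (a b : ℕ) (h1 : a ∣ n) (h2 : n ∣ a * b)
    (x : ZMod n) (hx : ZMod.castHom h1 (ZMod a) x = 0) : (b : ZMod n) * x = 0 := by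
  have hv : (a : ℕ) ∣ x.val := by
    have : ((x.val : ℕ) : ZMod a) = 0 := by
      rwa [ZMod.castHom_apply, ← ZMod.natCast_val] at hx
    exact (ZMod.natCast_eq_zero_iff _ _).mp this
  obtain ⟨c, hc⟩ := hv
  have hx' : x = ((x.val : ℕ) : ZMod n) := by rw [ZMod.natCast_val, ZMod.cast_id]
  rw [hx', ← Nat.cast_mul, hc, ZMod.natCast_eq_zero_iff]
  exact Dvd.dvd.trans h2 ⟨c, by ring⟩

lemma castHom_inv {m n : ℕ} (h : m ∣ n) (k : ℕ) (hk : k.Coprime n) :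
    ZMod.castHom h (ZMod m) ((k : ZMod n)⁻¹) = ((k : ZMod m))⁻¹ := by
  have h1 : (k : ZMod n) * (k : ZMod n)⁻¹ = 1 := ZMod.coe_mul_inv_eq_one k hk
  have h2 : (k : ZMod m) * (k : ZMod m)⁻¹ = 1 :=
    ZMod.coe_mul_inv_eq_one k (Nat.Coprime.coprime_dvd_right h hk)
  have h3 : (k : ZMod m) * (ZMod.castHom h (ZMod m) ((k : ZMod n)⁻¹)) = 1 := by
    have := congrArg (ZMod.castHom h (ZMod m)) h1
    rwa [map_mul, map_natCast, map_one] at this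
  calc ZMod.castHom h (ZMod m) ((k : ZMod n)⁻¹)
      = ZMod.castHom h (ZMod m) ((k : ZMod n)⁻¹) * ((k : ZMod m) * (k : ZMod m)⁻¹) := by
        rw [h2, mul_one]
    _ = ((k : ZMod m))⁻¹ * ((k : ZMod m) * ZMod.castHom h (ZMod m) ((k : ZMod n)⁻¹)) := by ring
    _ = ((k : ZMod m))⁻¹ := by rw [h3, mul_one]


lemma cop_of_lt {p k : ℕ} (hp : p.Prime) (h1 : 1 ≤ k) (h2 : k < p) : Nat.Coprime k p :=
  Nat.Coprime.symm ((Nat.Prime.coprime_iff_not_dvd hp).mpr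
    (fun hd => absurd (Nat.le_of_dvd h1 hd) (by omega)))

lemma sum_range_eq_sum_units {p : ℕ} [hpf : Fact p.Prime] {M : Type*} [AddCommMonoid M]
    (G : ZMod p → M) :
    ∑ j ∈ range (p - 1), G ((j + 1 : ℕ) : ZMod p) = ∑ x : (ZMod p)ˣ, G (x : ZMod p) := by
  have hp := hpf.out
  have hp1 : 1 < p := hp.one_lt
  refine Finset.sum_bij' (i := fun j hj => ZMod.unitOfCoprime (j + 1)
      (cop_of_lt hp (by omega) (by simp only [mem_range] at hj; omega)))
    (j := fun x _ => (x : ZMod p).val - 1) ?_ ?_ ?_ ?_ ?_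
  · intro a ha; exact mem_univ _
  · intro x _
    have h0 : (x : ZMod p).val ≠ 0 := by
      rw [Ne, ZMod.val_eq_zero]; exact x.ne_zero
    have hlt : (x : ZMod p).val < p := ZMod.val_lt _
    simp only [mem_range]; omega
  · intro a ha
    simp only [mem_range] at ha
    simp only [ZMod.coe_unitOfCoprime]
    rw [ZMod.val_cast_of_lt (by omega)]
    omega
  · intro x _
    have h0 : (x : ZMod p).val ≠ 0 := by
      rw [Ne, ZMod.val_eq_zero]; exact x.ne_zero
    apply Units.ext
    simp only [ZMod.coe_unitOfCoprime]
    have he : (x : ZMod p).val - 1 + 1 = (x : ZMod p).val := by omega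
    rw [he, ZMod.natCast_val, ZMod.cast_id]
  · intro a ha
    rw [ZMod.coe_unitOfCoprime]

lemma sum_units_inv_pow {p : ℕ} [hpf : Fact p.Prime] (h5 : 5 ≤ p) (i : ℕ) (h1 : 1 ≤ i) (h2 : i ≤ 2) :
    ∑ x : (ZMod p)ˣ, ((x : ZMod p)⁻¹) ^ i = 0 := by
  classical
  have e1 : ∑ x : (ZMod p)ˣ, ((x : ZMod p)⁻¹) ^ i = ∑ x : (ZMod p)ˣ, ((x : ZMod p)) ^ i := by
    refine Fintype.sum_equiv (Equiv.inv (ZMod p)ˣ) _ _ (fun x => ?_)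
    rw [Equiv.inv_apply]
    rw [Units.val_inv_eq_inv_val]
  rw [e1]
  have hs := FiniteField.sum_pow_units (ZMod p) i
  rw [ZMod.card] at hs
  have hnd : ¬ (p - 1 ∣ i) := by
    intro hd
    have := Nat.le_of_dvd (by omega) hd
    omega
  rw [if_neg hnd] at hs
  rw [← hs]

lemma sum_range_inv_pow {p : ℕ} [hpf : Fact p.Prime] (h5 : 5 ≤ p) (i : ℕ) (h1 : 1 ≤ i) (h2 : i ≤ 2) :
    ∑ j ∈ range (p - 1), (((j + 1 : ℕ) : ZMod p)⁻¹) ^ i = 0 := by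
  rw [sum_range_eq_sum_units (fun y => (y⁻¹) ^ i)]
  exact sum_units_inv_pow h5 i h1 h2



section Harm
variable {p : ℕ} [hpf : Fact p.Prime] (h5 : 5 ≤ p)

include h5 in
lemma my_two_ne_zero : (2 : ZMod p) ≠ 0 := by
  have : ((2:ℕ) : ZMod p) ≠ 0 := by
    rw [Ne, ZMod.natCast_eq_zero_iff]
    intro hd
    have := Nat.le_of_dvd (by omega) hd
    omega
  simpa using this

include h5 in
lemma T1_zero :
    ∑ j ∈ range (p - 1), (((j + 1 : ℕ) : ZMod p)⁻¹ * ∑ i ∈ range j, ((i + 1 : ℕ) : ZMod p)⁻¹) = 0 := by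
  have hsq := sq_sum (fun j => ((j + 1 : ℕ) : ZMod p)⁻¹) (p - 1)
  have hs1 := sum_range_inv_pow (p := p) h5 1 le_rfl one_le_two
  simp only [pow_one] at hs1
  have hq := sum_range_inv_pow (p := p) h5 2 one_le_two le_rfl
  simp only at hsq
  rw [hs1, hq] at hsq
  have h2 : (2 : ZMod p) * ∑ j ∈ range (p - 1),
      (((j + 1 : ℕ) : ZMod p)⁻¹ * ∑ i ∈ range j, ((i + 1 : ℕ) : ZMod p)⁻¹) = 0 := by
    linear_combination -hsq
  rcases mul_eq_zero.mp h2 with h | h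
  · exact absurd h (my_two_ne_zero h5)
  · exact h

include h5 in
lemma X1_zero :
    ∑ j ∈ range (p - 1), (((j + 1 : ℕ) : ZMod p)⁻¹ * ((p - 1 - j : ℕ) : ZMod p)⁻¹) = 0 := by
  have hcong : ∀ j ∈ range (p - 1),
      ((j + 1 : ℕ) : ZMod p)⁻¹ * ((p - 1 - j : ℕ) : ZMod p)⁻¹
        = -((((j + 1 : ℕ) : ZMod p)⁻¹) ^ 2) := by
    intro j hj
    rw [mem_range] at hj
    have hnat : (p - 1 - j) + (j + 1) = p := by omega
    have hcast : ((p - 1 - j : ℕ) : ZMod p) = -((j + 1 : ℕ) : ZMod p) := by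
      have : ((p - 1 - j : ℕ) : ZMod p) + ((j + 1 : ℕ) : ZMod p) = 0 := by
        rw [← Nat.cast_add, hnat, ZMod.natCast_self]
      linear_combination this
    rw [hcast, inv_neg]
    ring
  rw [Finset.sum_congr rfl hcong, Finset.sum_neg_distrib]
  rw [sum_range_inv_pow h5 2 one_le_two le_rfl, neg_zero]
end Harm



lemma S2_zero {p : ℕ} [hpf : Fact p.Prime] (h5 : 5 ≤ p) :
    ∑ j ∈ range (p - 1), ((j + 1 : ℕ) : ZMod (p ^ 2))⁻¹ = 0 := by
  have hp := hpf.out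
  haveI : NeZero (p ^ 2) := ⟨by positivity⟩
  set S : ZMod (p ^ 2) := ∑ j ∈ range (p - 1), ((j + 1 : ℕ) : ZMod (p ^ 2))⁻¹ with hS
  -- reflection
  have hrefl : S = ∑ j ∈ range (p - 1), ((p - 1 - j : ℕ) : ZMod (p ^ 2))⁻¹ := by
    rw [hS, ← Finset.sum_range_reflect (fun j => ((j + 1 : ℕ) : ZMod (p ^ 2))⁻¹) (p - 1)]
    apply Finset.sum_congr rfl
    intro j hj
    rw [mem_range] at hj
    congr 2
    omega
  -- coprimality facts
  have cop1 : ∀ j, j < p - 1 → Nat.Coprime (j + 1) (p ^ 2) := fun j hj =>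
    Nat.Coprime.pow_right 2 (cop_of_lt hp (by omega) (by omega))
  have cop2 : ∀ j, j < p - 1 → Nat.Coprime (p - 1 - j) (p ^ 2) := fun j hj =>
    Nat.Coprime.pow_right 2 (cop_of_lt hp (by omega) (by omega))
  set X : ZMod (p ^ 2) :=
    ∑ j ∈ range (p - 1), (((j + 1 : ℕ) : ZMod (p ^ 2))⁻¹ * ((p - 1 - j : ℕ) : ZMod (p ^ 2))⁻¹)
    with hX
  have h2S : S + S = ((p : ℕ) : ZMod (p ^ 2)) * X := by
    nth_rewrite 2 [hrefl]
    nth_rewrite 1 [hS]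
    rw [← Finset.sum_add_distrib, hX, Finset.mul_sum]
    apply Finset.sum_congr rfl
    intro j hj
    rw [mem_range] at hj
    have ha : ((j + 1 : ℕ) : ZMod (p ^ 2)) * ((j + 1 : ℕ) : ZMod (p ^ 2))⁻¹ = 1 :=
      ZMod.coe_mul_inv_eq_one _ (cop1 j hj)
    have hc : ((p - 1 - j : ℕ) : ZMod (p ^ 2)) * ((p - 1 - j : ℕ) : ZMod (p ^ 2))⁻¹ = 1 :=
      ZMod.coe_mul_inv_eq_one _ (cop2 j hj)
    have hsum : ((j + 1 : ℕ) : ZMod (p ^ 2)) + ((p - 1 - j : ℕ) : ZMod (p ^ 2))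
        = ((p : ℕ) : ZMod (p ^ 2)) := by
      rw [← Nat.cast_add]
      congr 1
      omega
    linear_combination (-(((p - 1 - j : ℕ) : ZMod (p ^ 2))⁻¹)) * ha
      - (((j + 1 : ℕ) : ZMod (p ^ 2))⁻¹) * hc
      + (((j + 1 : ℕ) : ZMod (p ^ 2))⁻¹ * ((p - 1 - j : ℕ) : ZMod (p ^ 2))⁻¹) * hsum
  have hdvd : p ∣ p ^ 2 := ⟨p, by ring⟩
  have hXcast : ZMod.castHom hdvd (ZMod p) X = 0 := by
    rw [hX, map_sum]
    rw [← X1_zero (p := p) h5]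
    apply Finset.sum_congr rfl
    intro j hj
    rw [mem_range] at hj
    rw [map_mul, castHom_inv hdvd _ (cop1 j hj), castHom_inv hdvd _ (cop2 j hj)]
  have hpX : ((p : ℕ) : ZMod (p ^ 2)) * X = 0 :=
    key_mul_zero p p hdvd ⟨1, by ring⟩ X hXcast
  have h2S0 : (2 : ZMod (p ^ 2)) * S = 0 := by
    rw [two_mul, h2S, hpX]
  have hu : IsUnit (2 : ZMod (p ^ 2)) := by
    have : IsUnit ((2 : ℕ) : ZMod (p ^ 2)) := by
      rw [ZMod.isUnit_iff_coprime]
      apply Nat.Coprime.pow_right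
      rw [Nat.coprime_comm]
      exact (Nat.coprime_primes hp Nat.prime_two).mpr (by omega)
    simpa using this
  exact (hu.mul_right_eq_zero).mp h2S0



theorem wolstenholme (p : ℕ) (hp : p.Prime) (h5 : 5 ≤ p) :
    ((Nat.choose (2 * p - 1) (p - 1) : ZMod (p ^ 3)) = 1) := by
  haveI : Fact p.Prime := ⟨hp⟩
  haveI : NeZero (p ^ 3) := ⟨by positivity⟩
  -- ℕ identity
  have hnat : Nat.choose (2 * p - 1) (p - 1) * Nat.factorial (p - 1)
      = ∏ j ∈ range (p - 1), (p + j + 1) := by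
    have h1 : Nat.choose (2 * p - 1) (p - 1) * Nat.factorial (p - 1) * Nat.factorial p
        = Nat.factorial (2 * p - 1) := by
      have := Nat.choose_mul_factorial_mul_factorial (n := 2 * p - 1) (k := p - 1) (by omega)
      have hsub : 2 * p - 1 - (p - 1) = p := by omega
      rwa [hsub] at this
    have h2 : Nat.factorial (2 * p - 1) = Nat.factorial p * ∏ j ∈ range (p - 1), (p + j + 1) := by
      rw [← Finset.prod_range_add_one_eq_factorial, ← Finset.prod_range_add_one_eq_factorial]
      have hsplit : 2 * p - 1 = p + (p - 1) := by omega
      rw [hsplit, Finset.prod_range_add]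
    apply Nat.eq_of_mul_eq_mul_right (Nat.factorial_pos p)
    rw [h1, h2]
    ring
  -- coprimality
  have cop1 : ∀ j, j < p - 1 → Nat.Coprime (j + 1) (p ^ 3) := fun j hj =>
    Nat.Coprime.pow_right 3 (cop_of_lt hp (by omega) (by omega))
  -- cast to R
  set R := ZMod (p ^ 3)
  set b : ℕ → R := fun j => ((j + 1 : ℕ) : R)⁻¹ with hb
  have hfact : ∀ j, j < p - 1 → ((j + 1 : ℕ) : R) * b j = 1 := fun j hj =>
    ZMod.coe_mul_inv_eq_one _ (cop1 j hj)
  have hcastid : (Nat.choose (2 * p - 1) (p - 1) : R) * ((Nat.factorial (p - 1) : ℕ) : R)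
      = ∏ j ∈ range (p - 1), ((p + j + 1 : ℕ) : R) := by
    rw [← Nat.cast_prod, ← Nat.cast_mul, hnat]
  have hprodsplit : ∏ j ∈ range (p - 1), ((p + j + 1 : ℕ) : R)
      = ((Nat.factorial (p - 1) : ℕ) : R) * ∏ j ∈ range (p - 1), (1 + (p : R) * b j) := by
    have hcongr : ∀ j ∈ range (p - 1),
        ((p + j + 1 : ℕ) : R) = ((j + 1 : ℕ) : R) * (1 + (p : R) * b j) := by
      intro j hj
      rw [mem_range] at hj
      have ha := hfact j hj
      push_cast at ha ⊢
      linear_combination (-(p : R)) * ha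
    rw [Finset.prod_congr rfl hcongr, Finset.prod_mul_distrib, ← Nat.cast_prod,
      Finset.prod_range_add_one_eq_factorial]
  have hunit : IsUnit ((Nat.factorial (p - 1) : ℕ) : R) := by
    rw [ZMod.isUnit_iff_coprime]
    apply Nat.Coprime.pow_right
    rw [Nat.coprime_comm]
    exact (Nat.Prime.coprime_iff_not_dvd hp).mpr (fun hd => by
      have := (Nat.Prime.dvd_factorial hp).mp hd
      omega)
  have hC : (Nat.choose (2 * p - 1) (p - 1) : R) = ∏ j ∈ range (p - 1), (1 + (p : R) * b j) := by
    apply hunit.mul_left_cancel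
    rw [mul_comm (((Nat.factorial (p - 1) : ℕ) : R)) _, hcastid, hprodsplit]
  -- expansion
  have hp3 : (p : R) ^ 3 = 0 := by
    have : ((p ^ 3 : ℕ) : R) = 0 := ZMod.natCast_self _
    push_cast at this
    exact this
  rw [hC, prod_one_add (p : R) hp3 b (p - 1)]
  -- S vanishes
  have hdvd2 : p ^ 2 ∣ p ^ 3 := ⟨p, by ring⟩
  have hdvd1 : p ∣ p ^ 3 := ⟨p ^ 2, by ring⟩
  have hS : (p : R) * (∑ k ∈ range (p - 1), b k) = 0 := by
    have hxc : ZMod.castHom hdvd2 (ZMod (p ^ 2)) (∑ k ∈ range (p - 1), b k) = 0 := by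
      rw [map_sum, ← S2_zero (p := p) h5]
      apply Finset.sum_congr rfl
      intro j hj
      rw [mem_range] at hj
      exact castHom_inv hdvd2 _ (cop1 j hj)
    have := key_mul_zero (n := p ^ 3) (p ^ 2) p hdvd2 ⟨1, by ring⟩ _ hxc
    exact_mod_cast this
  -- T vanishes
  have hT : (p : R) ^ 2 * (∑ k ∈ range (p - 1), b k * ∑ i ∈ range k, b i) = 0 := by
    have hxc : ZMod.castHom hdvd1 (ZMod p)
        (∑ k ∈ range (p - 1), b k * ∑ i ∈ range k, b i) = 0 := by
      rw [map_sum, ← T1_zero (p := p) h5]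
      apply Finset.sum_congr rfl
      intro j hj
      rw [mem_range] at hj
      rw [map_mul, castHom_inv hdvd1 _ (cop1 j hj), map_sum]
      congr 1
      apply Finset.sum_congr rfl
      intro i hi
      rw [mem_range] at hi
      exact castHom_inv hdvd1 _ (cop1 i (by omega))
    have := key_mul_zero (n := p ^ 3) p (p ^ 2) hdvd1 ⟨1, by ring⟩ _ hxc
    rw [← this]
    push_cast
    ring
  rw [hS, hT, add_zero, add_zero]
end

section
/- For every prime p ≥ 5, the sum 1 + 1/2 + 1/3 + ... + 1/(p-1), where 1/k denotes the multiplicative inverse of k modulo p², is ≡ 0 (mod p²). -/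
open Finset

lemma zmod_range_sum {p : ℕ} [NeZero p] {M : Type*} [AddCommMonoid M] (f : ZMod p → M) :
    ∑ i ∈ Finset.range p, f (i : ZMod p) = ∑ x : ZMod p, f x := by
  refine Finset.sum_nbij' (fun i => (i : ZMod p)) (fun x => x.val) ?_ ?_ ?_ ?_ ?_
  · intro a _; exact Finset.mem_univ _
  · intro x _; simpa using ZMod.val_lt x
  · intro a ha; exact ZMod.val_cast_of_lt (Finset.mem_range.1 ha)
  · intro x _; exact ZMod.natCast_rightInverse x
  · intro a _; rfl

lemma pmul_eq_zero {p : ℕ} (hp : p.Prime) (x : ZMod (p ^ 2))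
    (h : ZMod.castHom (dvd_pow_self p two_ne_zero) (ZMod p) x = 0) :
    (p : ZMod (p ^ 2)) * x = 0 := by
  have : NeZero (p ^ 2) := ⟨pow_ne_zero 2 hp.ne_zero⟩
  have hx : ((x.val : ℕ) : ZMod (p ^ 2)) = x := ZMod.natCast_rightInverse x
  have h' : ((x.val : ℕ) : ZMod p) = 0 := by
    rw [← h, ZMod.castHom_apply]
    conv_rhs => rw [← hx]
    simp
  obtain ⟨k, hk⟩ := (ZMod.natCast_eq_zero_iff _ _).1 h'
  calc (p : ZMod (p ^ 2)) * x = ((p * x.val : ℕ) : ZMod (p ^ 2)) := by push_cast [hx]; ring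
    _ = ((p ^ 2 * k : ℕ) : ZMod (p ^ 2)) := by rw [hk]; ring_nf
    _ = 0 := by simp

theorem harmonic_sum_mod_p_sq (p : ℕ) (hp : p.Prime) (h5 : 5 ≤ p) :
    ∑ i ∈ Finset.Icc 1 (p - 1), ((i : ZMod (p ^ 2)))⁻¹ = 0 := by
  have hp0 : 0 < p := by omega
  have : Fact p.Prime := ⟨hp⟩
  set s := Finset.Icc 1 (p - 1) with hs
  have hcop : ∀ i ∈ s, Nat.Coprime i (p ^ 2) := by
    intro i hi
    simp only [hs, Finset.mem_Icc] at hi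
    refine Nat.Coprime.pow_right 2 ?_
    rw [Nat.coprime_comm]
    exact (Nat.Prime.coprime_iff_not_dvd hp).2 (fun hd => by
      have := Nat.le_of_dvd (by omega) hd; omega)
  set S := ∑ i ∈ s, ((i : ZMod (p ^ 2)))⁻¹ with hS
  -- reflection
  have reflect : S = ∑ i ∈ s, (((p - i : ℕ) : ZMod (p ^ 2)))⁻¹ := by
    refine Finset.sum_nbij' (fun i => p - i) (fun i => p - i) ?_ ?_ ?_ ?_ ?_ <;>
      intro a ha <;> simp only [hs, Finset.mem_Icc] at ha <;>
      first
        | (simp only [hs, Finset.mem_Icc]; omega)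
        | (show p - (p - a) = a; omega)
        | (show ((a : ZMod (p ^ 2)))⁻¹ = (((p - (p - a) : ℕ) : ZMod (p ^ 2)))⁻¹; congr 2; omega)
  -- per-term identity
  have key : ∀ i ∈ s, ((i : ZMod (p ^ 2)))⁻¹ + (((p - i : ℕ) : ZMod (p ^ 2)))⁻¹
      = (p : ZMod (p ^ 2)) * (((i * (p - i) : ℕ) : ZMod (p ^ 2)))⁻¹ := by
    intro i hi
    have hi2 : p - i ∈ s := by
      simp only [hs, Finset.mem_Icc] at hi ⊢; omega
    set u := ZMod.unitOfCoprime i (hcop i hi) with hu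
    set v := ZMod.unitOfCoprime (p - i) (hcop _ hi2) with hv
    have hcu : ((u : ZMod (p ^ 2))) = (i : ZMod (p ^ 2)) := ZMod.coe_unitOfCoprime _ _
    have hcv : ((v : ZMod (p ^ 2))) = ((p - i : ℕ) : ZMod (p ^ 2)) := ZMod.coe_unitOfCoprime _ _
    have hcw : (((u * v) : (ZMod (p ^ 2))ˣ) : ZMod (p ^ 2)) = ((i * (p - i) : ℕ) : ZMod (p ^ 2)) := by
      push_cast [hcu, hcv]; ring
    have e1 : ((i : ZMod (p ^ 2)))⁻¹ = ((u⁻¹ : (ZMod (p ^ 2))ˣ) : ZMod (p ^ 2)) := by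
      rw [← hcu, ZMod.inv_coe_unit]
    have e2 : (((p - i : ℕ) : ZMod (p ^ 2)))⁻¹ = ((v⁻¹ : (ZMod (p ^ 2))ˣ) : ZMod (p ^ 2)) := by
      rw [← hcv, ZMod.inv_coe_unit]
    have e3 : (((i * (p - i) : ℕ) : ZMod (p ^ 2)))⁻¹
        = (((u * v)⁻¹ : (ZMod (p ^ 2))ˣ) : ZMod (p ^ 2)) := by
      rw [← hcw, ZMod.inv_coe_unit]
    have hpsum : (p : ZMod (p ^ 2)) = (u : ZMod (p ^ 2)) + (v : ZMod (p ^ 2)) := by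
      rw [hcu, hcv]
      have : ((i + (p - i) : ℕ) : ZMod (p ^ 2)) = (p : ZMod (p ^ 2)) := by
        congr 1
        simp only [hs, Finset.mem_Icc] at hi; omega
      push_cast at this
      linear_combination this.symm
    rw [e1, e2, e3, hpsum, mul_inv_rev, Units.val_mul]
    linear_combination (-((v⁻¹ : (ZMod (p ^ 2))ˣ) : ZMod (p ^ 2))) * Units.mul_inv u
      - ((u⁻¹ : (ZMod (p ^ 2))ˣ) : ZMod (p ^ 2)) * Units.mul_inv v
  -- 2S = p * X
  set X := ∑ i ∈ s, (((i * (p - i) : ℕ) : ZMod (p ^ 2)))⁻¹ with hX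
  have h2S : S + S = (p : ZMod (p ^ 2)) * X := by
    nth_rewrite 2 [reflect]
    rw [hS, ← Finset.sum_add_distrib, hX, Finset.mul_sum]
    exact Finset.sum_congr rfl key
  -- castHom X = 0
  have hcast : ZMod.castHom (dvd_pow_self p two_ne_zero) (ZMod p) X = 0 := by
    rw [hX, map_sum]
    have each : ∀ i ∈ s,
        ZMod.castHom (dvd_pow_self p two_ne_zero) (ZMod p) (((i * (p - i) : ℕ) : ZMod (p ^ 2)))⁻¹
        = -(((i : ZMod p))⁻¹ ^ 2) := by
      intro i hi
      have hco : Nat.Coprime (i * (p - i)) (p ^ 2) := by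
        have hi2 : p - i ∈ s := by simp only [hs, Finset.mem_Icc] at hi ⊢; omega
        exact Nat.Coprime.mul (hcop i hi) (hcop _ hi2)
      have hone : ((i * (p - i) : ℕ) : ZMod (p ^ 2)) * (((i * (p - i) : ℕ) : ZMod (p ^ 2)))⁻¹ = 1 :=
        ZMod.coe_mul_inv_eq_one _ hco
      have hmap := congrArg (ZMod.castHom (dvd_pow_self p two_ne_zero) (ZMod p)) hone
      rw [map_mul, map_one, map_natCast] at hmap
      have hneg : ((p - i : ℕ) : ZMod p) = -(i : ZMod p) := by
        have : ((p - i + i : ℕ) : ZMod p) = ((p : ℕ) : ZMod p) := by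
          congr 1; simp only [hs, Finset.mem_Icc] at hi; omega
        push_cast at this
        rw [ZMod.natCast_self] at this
        linear_combination this
      have hval : ((i * (p - i) : ℕ) : ZMod p) = -((i : ZMod p) ^ 2) := by
        push_cast [hneg]; ring
      rw [hval] at hmap
      have : ZMod.castHom (dvd_pow_self p two_ne_zero) (ZMod p) (((i * (p - i) : ℕ) : ZMod (p ^ 2)))⁻¹
          = (-((i : ZMod p) ^ 2))⁻¹ :=
        (inv_eq_of_mul_eq_one_right hmap).symm
      rw [this, inv_neg, inv_pow]
    rw [Finset.sum_congr rfl each, Finset.sum_neg_distrib, neg_eq_zero]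
    -- sum over s of (i⁻¹)^2 equals sum over all of ZMod p of (x⁻¹)^2
    have hins : Finset.range p = insert 0 s := by
      ext x; simp only [Finset.mem_range, Finset.mem_insert, hs, Finset.mem_Icc]; omega
    have hsum : ∑ i ∈ s, ((i : ZMod p))⁻¹ ^ 2 = ∑ i ∈ Finset.range p, ((i : ZMod p))⁻¹ ^ 2 := by
      rw [hins, Finset.sum_insert (by simp [hs])]
      simp
    rw [hsum, zmod_range_sum (fun x : ZMod p => x⁻¹ ^ 2)]
    have hinv : ∑ x : ZMod p, x⁻¹ ^ 2 = ∑ x : ZMod p, x ^ 2 :=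
      Equiv.sum_comp (Equiv.inv (ZMod p)) (fun x : ZMod p => x ^ 2)
    rw [hinv]
    exact FiniteField.sum_pow_lt_card_sub_one (K := ZMod p) 2 (by rw [ZMod.card]; omega)
  have hpX : (p : ZMod (p ^ 2)) * X = 0 := pmul_eq_zero hp X hcast
  have h2unit : IsUnit (2 : ZMod (p ^ 2)) := by
    have : ((2 : ℕ) : ZMod (p ^ 2)) = (2 : ZMod (p ^ 2)) := by norm_num
    rw [← this, ZMod.isUnit_iff_coprime]
    refine Nat.Coprime.pow_right 2 ?_
    rw [Nat.coprime_comm]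
    exact (Nat.coprime_primes hp Nat.prime_two).2 (by omega)
  have h2Szero : (2 : ZMod (p ^ 2)) * S = 0 := by rw [two_mul, h2S, hpX]
  exact (IsUnit.mul_right_eq_zero h2unit).1 h2Szero
end

section
/- For every prime p ≥ 5, the sum 1 + 1/2² + 1/3² + ... + 1/(p-1)² ≡ 0 (mod p), where inverses are taken in ℤ/pℤ. -/
theorem inv_square_sum_mod_p (p : ℕ) (hp : p.Prime) (h5 : 5 ≤ p) :
    ∑ i ∈ Finset.Icc 1 (p - 1), ((i : ZMod p) ^ 2)⁻¹ = 0 := by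
  haveI : Fact p.Prime := ⟨hp⟩
  -- reindex over ZMod p \ {0}
  have h1 : ∑ i ∈ Finset.Icc 1 (p - 1), ((i : ZMod p) ^ 2)⁻¹
      = ∑ x ∈ (Finset.univ : Finset (ZMod p)) \ {0}, (x ^ 2)⁻¹ := by
    refine Finset.sum_nbij' (fun i => (i : ZMod p)) (fun x => x.val) ?_ ?_ ?_ ?_ ?_
    · intro i hi
      simp only [Finset.mem_Icc] at hi
      simp only [Finset.mem_sdiff, Finset.mem_univ, Finset.mem_singleton, true_and]
      have : i % p = i := Nat.mod_eq_of_lt (by omega)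
      intro h
      have := (ZMod.natCast_eq_zero_iff i p).mp h
      have := Nat.le_of_dvd (by omega) this
      omega
    · intro x hx
      simp only [Finset.mem_sdiff, Finset.mem_univ, Finset.mem_singleton, true_and] at hx
      simp only [Finset.mem_Icc]
      have h1 : x.val < p := ZMod.val_lt x
      have h2 : x.val ≠ 0 := fun h => hx (by rwa [← ZMod.val_eq_zero])
      omega
    · intro i hi
      simp only [Finset.mem_Icc] at hi
      exact ZMod.val_natCast_of_lt (by omega)
    · intro x hx; simp [ZMod.natCast_val, ZMod.cast_id]
    · intro i hi; rfl
  rw [h1]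
  -- invert
  have h2 : ∑ x ∈ (Finset.univ : Finset (ZMod p)) \ {0}, (x ^ 2)⁻¹
      = ∑ x ∈ (Finset.univ : Finset (ZMod p)) \ {0}, x ^ 2 := by
    refine Finset.sum_nbij' (fun x => x⁻¹) (fun x => x⁻¹) ?_ ?_ ?_ ?_ ?_
    · intro x hx
      simp only [Finset.mem_sdiff, Finset.mem_univ, Finset.mem_singleton, true_and] at hx ⊢
      exact inv_ne_zero hx
    · intro x hx
      simp only [Finset.mem_sdiff, Finset.mem_univ, Finset.mem_singleton, true_and] at hx ⊢
      exact inv_ne_zero hx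
    · intro x hx
      simp only [Finset.mem_sdiff, Finset.mem_univ, Finset.mem_singleton, true_and] at hx
      exact inv_inv x
    · intro x hx
      simp only [Finset.mem_sdiff, Finset.mem_univ, Finset.mem_singleton, true_and] at hx
      exact inv_inv x
    · intro x hx
      rw [inv_pow]
  rw [h2]
  have h3 : ∑ x ∈ (Finset.univ : Finset (ZMod p)) \ {0}, x ^ 2
      = ∑ x : ZMod p, x ^ 2 := by
    rw [Finset.sum_sdiff_eq_sub (Finset.subset_univ _)]
    simp
  rw [h3]
  apply FiniteField.sum_pow_lt_card_sub_one
  rw [ZMod.card]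
  omega
end

section
/- For every prime p ≥ 7, the sum ∑_{1 ≤ i < j < k ≤ p-1} 1/(ijk) ≡ 0 (mod p²), where inverses are taken in ℤ/p²ℤ. -/
open Finset

section Comb

variable {R : Type*} [CommRing R]

lemma e2_id (f : ℕ → R) (m : ℕ) :
    2 * (∑ i ∈ Icc 1 m, ∑ j ∈ Icc (i+1) m, f i * f j)
      = (∑ i ∈ Icc 1 m, f i)^2 - ∑ i ∈ Icc 1 m, (f i)^2 := by
  induction m with
  | zero => simp
  | succ m ih =>
    have hempty : Icc (m+1+1) (m+1) = (∅ : Finset ℕ) := Icc_eq_empty (by omega)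
    rw [sum_Icc_succ_top (by omega : 1 ≤ m+1), sum_Icc_succ_top (by omega : 1 ≤ m+1),
      sum_Icc_succ_top (by omega : 1 ≤ m+1), hempty, sum_empty,
      sum_congr rfl (fun i hi => sum_Icc_succ_top (by simp at hi; omega : i+1 ≤ m+1)
        (fun j => f i * f j)), sum_add_distrib, ← sum_mul]
    linear_combination ih

lemma e3_id (f : ℕ → R) (m : ℕ) :
    6 * (∑ i ∈ Icc 1 m, ∑ j ∈ Icc (i+1) m, ∑ k ∈ Icc (j+1) m, f i * f j * f k)
      = (∑ i ∈ Icc 1 m, f i)^3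
        - 3 * (∑ i ∈ Icc 1 m, (f i)^2) * (∑ i ∈ Icc 1 m, f i)
        + 2 * ∑ i ∈ Icc 1 m, (f i)^3 := by
  induction m with
  | zero => simp
  | succ m ih =>
    have hempty : Icc (m+1+1) (m+1) = (∅ : Finset ℕ) := Icc_eq_empty (by omega)
    have hin : ∀ i ∈ Icc 1 m, ∑ j ∈ Icc (i+1) (m+1), ∑ k ∈ Icc (j+1) (m+1), f i * f j * f k
        = (∑ j ∈ Icc (i+1) m, ∑ k ∈ Icc (j+1) m, f i * f j * f k)
          + (∑ j ∈ Icc (i+1) m, f i * f j) * f (m+1) := by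
      intro i hi
      rw [sum_Icc_succ_top (by simp at hi; omega : i+1 ≤ m+1), hempty, sum_empty, add_zero,
        sum_congr rfl (fun j hj => sum_Icc_succ_top (by simp at hj; omega : j+1 ≤ m+1)
          (fun k => f i * f j * f k)), sum_add_distrib, ← sum_mul]
    rw [sum_Icc_succ_top (by omega : 1 ≤ m+1), sum_Icc_succ_top (by omega : 1 ≤ m+1),
      sum_Icc_succ_top (by omega : 1 ≤ m+1), sum_Icc_succ_top (by omega : 1 ≤ m+1),
      hempty, sum_empty, add_zero, sum_congr rfl hin, sum_add_distrib, ← sum_mul]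
    linear_combination ih + 3 * f (m+1) * e2_id f m

end Comb

section ZModLemmas

variable {p : ℕ} (hp : p.Prime)

lemma zmod_mul_inv {n : ℕ} {a b : ZMod n} (ha : IsUnit a) (hb : IsUnit b) :
    (a * b)⁻¹ = a⁻¹ * b⁻¹ :=
  ZMod.inv_eq_of_mul_eq_one _ _ _ (by
    rw [mul_mul_mul_comm, ZMod.mul_inv_of_unit a ha, ZMod.mul_inv_of_unit b hb, one_mul])

include hp in
lemma unit_sq {i : ℕ} (h1 : 1 ≤ i) (h2 : i ≤ p - 1) : IsUnit ((i : ℕ) : ZMod (p ^ 2)) := by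
  rw [ZMod.isUnit_iff_coprime]
  have h2p := hp.two_le
  have hnd : ¬ p ∣ i := fun h => by have := Nat.le_of_dvd (by omega) h; omega
  exact Nat.Coprime.pow_right 2 ((hp.coprime_iff_not_dvd.mpr hnd).symm)

include hp in
lemma p_mul_eq_zero {x : ZMod (p ^ 2)}
    (h : (ZMod.castHom (dvd_pow_self p two_ne_zero) (ZMod p)) x = 0) :
    (p : ZMod (p ^ 2)) * x = 0 := by
  haveI : NeZero (p ^ 2) := ⟨pow_ne_zero 2 hp.pos.ne'⟩
  have hval : ((x.val : ℕ) : ZMod p) = 0 := by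
    rwa [ZMod.castHom_apply, ← ZMod.natCast_val] at h
  obtain ⟨m, hm⟩ := (ZMod.natCast_eq_zero_iff _ _).mp hval
  calc (p : ZMod (p ^ 2)) * x = (p : ZMod (p ^ 2)) * ((x.val : ℕ) : ZMod (p ^ 2)) := by
        rw [ZMod.natCast_zmod_val]
    _ = ((p * (p * m) : ℕ) : ZMod (p ^ 2)) := by rw [hm]; push_cast; ring
    _ = ((p ^ 2 : ℕ) : ZMod (p ^ 2)) * (m : ZMod (p ^ 2)) := by push_cast; ring
    _ = 0 := by rw [ZMod.natCast_self, zero_mul]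

lemma cast_inv_unit {n m : ℕ} (hd : m ∣ n) {a : ℕ} (ha : IsUnit ((a : ℕ) : ZMod n)) :
    (ZMod.castHom hd (ZMod m)) (((a : ℕ) : ZMod n)⁻¹) = ((a : ℕ) : ZMod m)⁻¹ := by
  have h1 : (ZMod.castHom hd (ZMod m)) (((a : ℕ) : ZMod n)⁻¹) * ((a : ℕ) : ZMod m) = 1 := by
    rw [show ((a : ℕ) : ZMod m) = (ZMod.castHom hd (ZMod m)) ((a : ℕ) : ZMod n) by
      simp [map_natCast], ← map_mul, ZMod.inv_mul_of_unit _ ha, map_one]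
  exact (ZMod.inv_eq_of_mul_eq_one _ _ _ (by rw [mul_comm]; exact h1)).symm

end ZModLemmas

section Main

variable {p : ℕ}

lemma sum_icc_inv_pow (hp : p.Prime) {k : ℕ} (hk0 : 0 < k) (hk : k < p - 1) :
    ∑ i ∈ Icc 1 (p - 1), ((i : ℕ) : ZMod p)⁻¹ ^ k = 0 := by
  haveI : Fact p.Prime := ⟨hp⟩
  have h2p := hp.two_le
  classical
  have h1 : ∑ i ∈ Icc 1 (p - 1), ((i : ℕ) : ZMod p)⁻¹ ^ k
      = ∑ x ∈ univ \ {(0 : ZMod p)}, x⁻¹ ^ k := by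
    refine Finset.sum_nbij' (i := fun i => ((i : ℕ) : ZMod p)) (j := fun x => x.val)
      ?_ ?_ ?_ ?_ ?_
    · intro a ha
      simp only [mem_Icc] at ha
      simp only [mem_sdiff, mem_univ, mem_singleton, true_and]
      simp only [ne_eq, ZMod.natCast_eq_zero_iff]
      exact fun h => by have := Nat.le_of_dvd (by omega) h; omega
    · intro x hx
      simp only [mem_sdiff, mem_univ, mem_singleton, true_and] at hx
      have hlt : x.val < p := ZMod.val_lt x
      have hne : x.val ≠ 0 := fun h => hx ((ZMod.val_eq_zero x).mp h)
      simp only [mem_Icc]; omega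
    · intro a ha
      simp only [mem_Icc] at ha
      exact ZMod.val_cast_of_lt (by omega)
    · intro x _
      exact ZMod.natCast_zmod_val x
    · intro a _; rfl
  have h2 : ∑ x ∈ univ \ {(0 : ZMod p)}, x⁻¹ ^ k = ∑ x : ZMod p, x⁻¹ ^ k :=
    Finset.sum_subset (subset_univ _) (by
      intro x _ hx
      simp only [mem_sdiff, mem_univ, mem_singleton, true_and, not_not] at hx
      rw [hx, inv_zero, zero_pow hk0.ne'])
  have h3 : ∑ x : ZMod p, x⁻¹ ^ k = ∑ x : ZMod p, x ^ k :=
    Fintype.sum_bijective (·⁻¹) inv_involutive.bijective _ _ (fun x => rfl)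
  rw [h1, h2, h3]
  exact FiniteField.sum_pow_lt_card_sub_one (K := ZMod p) k (by rw [ZMod.card]; exact hk)

lemma p_mul_s_pow (hp : p.Prime) (h7 : 7 ≤ p) {k : ℕ} (hk0 : 0 < k) (hk : k < p - 1) :
    (p : ZMod (p ^ 2)) * ∑ i ∈ Icc 1 (p - 1), ((i : ℕ) : ZMod (p ^ 2))⁻¹ ^ k = 0 := by
  apply p_mul_eq_zero hp
  rw [map_sum]
  rw [sum_congr rfl (fun i hi => ?_), sum_icc_inv_pow hp hk0 hk]
  simp only [mem_Icc] at hi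
  rw [map_pow, cast_inv_unit _ (unit_sq hp hi.1 hi.2)]

lemma sum_reflect {R : Type*} [AddCommMonoid R] (h2p : 2 ≤ p) (g : ℕ → R) :
    ∑ i ∈ Icc 1 (p - 1), g i = ∑ i ∈ Icc 1 (p - 1), g (p - i) := by
  refine Finset.sum_nbij' (i := fun i => p - i) (j := fun i => p - i) ?_ ?_ ?_ ?_ ?_ <;>
    intro a ha <;> simp only [mem_Icc] at * <;> try omega
  rw [show p - (p - a) = a by omega]

lemma reflect_inv (hp : p.Prime) {i : ℕ} (h1 : 1 ≤ i) (h2 : i ≤ p - 1) :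
    ((p - i : ℕ) : ZMod (p ^ 2))⁻¹
      = -(((i : ℕ) : ZMod (p ^ 2))⁻¹ + (p : ZMod (p ^ 2)) * ((i : ℕ) : ZMod (p ^ 2))⁻¹ ^ 2) := by
  have h2p := hp.two_le
  have hu := unit_sq hp h1 h2
  have hui : ((i : ℕ) : ZMod (p ^ 2)) * ((i : ℕ) : ZMod (p ^ 2))⁻¹ = 1 :=
    ZMod.mul_inv_of_unit _ hu
  have hp2 : ((p : ℕ) : ZMod (p ^ 2)) ^ 2 = 0 := by
    rw [← Nat.cast_pow, ZMod.natCast_self]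
  have hcast : ((p - i : ℕ) : ZMod (p ^ 2)) = (p : ZMod (p ^ 2)) - ((i : ℕ) : ZMod (p ^ 2)) := by
    have hip : i ≤ p := by omega
    push_cast [hip]; ring
  rw [hcast]
  apply ZMod.inv_eq_of_mul_eq_one
  linear_combination (1 + (p : ZMod (p ^ 2)) * ((i : ℕ) : ZMod (p ^ 2))⁻¹) * hui
    - ((i : ℕ) : ZMod (p ^ 2))⁻¹ ^ 2 * hp2

lemma s1_eq_zero (hp : p.Prime) (h7 : 7 ≤ p) :
    ∑ i ∈ Icc 1 (p - 1), ((i : ℕ) : ZMod (p ^ 2))⁻¹ = 0 := by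
  have h2p := hp.two_le
  set S1 := ∑ i ∈ Icc 1 (p - 1), ((i : ℕ) : ZMod (p ^ 2))⁻¹ with hS1
  have key : ∀ i ∈ Icc 1 (p - 1),
      ((i : ℕ) : ZMod (p ^ 2))⁻¹ + ((p - i : ℕ) : ZMod (p ^ 2))⁻¹
        = -((p : ZMod (p ^ 2)) * ((i : ℕ) : ZMod (p ^ 2))⁻¹ ^ 2) := by
    intro i hi
    simp only [mem_Icc] at hi
    rw [reflect_inv hp hi.1 hi.2]; ring
  have h2 : ((2 : ℕ) : ZMod (p ^ 2)) * S1
      = -((p : ZMod (p ^ 2)) * ∑ i ∈ Icc 1 (p - 1), ((i : ℕ) : ZMod (p ^ 2))⁻¹ ^ 2) := by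
    calc ((2 : ℕ) : ZMod (p ^ 2)) * S1
        = S1 + ∑ i ∈ Icc 1 (p - 1), ((p - i : ℕ) : ZMod (p ^ 2))⁻¹ := by
          rw [hS1, ← sum_reflect h2p (fun i => ((i : ℕ) : ZMod (p ^ 2))⁻¹)]; push_cast; ring
      _ = ∑ i ∈ Icc 1 (p - 1),
            (((i : ℕ) : ZMod (p ^ 2))⁻¹ + ((p - i : ℕ) : ZMod (p ^ 2))⁻¹) := by
          rw [sum_add_distrib]
      _ = ∑ i ∈ Icc 1 (p - 1), -((p : ZMod (p ^ 2)) * ((i : ℕ) : ZMod (p ^ 2))⁻¹ ^ 2) :=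
          sum_congr rfl key
      _ = -((p : ZMod (p ^ 2)) * ∑ i ∈ Icc 1 (p - 1), ((i : ℕ) : ZMod (p ^ 2))⁻¹ ^ 2) := by
          rw [sum_neg_distrib, ← mul_sum]
  rw [p_mul_s_pow hp h7 (by norm_num) (by omega), neg_zero] at h2
  have hu2 : IsUnit ((2 : ℕ) : ZMod (p ^ 2)) := by
    rw [ZMod.isUnit_iff_coprime]
    exact Nat.Coprime.pow_right 2
      ((hp.coprime_iff_not_dvd.mpr (fun h => by have := Nat.le_of_dvd (by norm_num) h; omega)).symm)
  calc S1 = ((2 : ℕ) : ZMod (p ^ 2))⁻¹ * (((2 : ℕ) : ZMod (p ^ 2)) * S1) := by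
        rw [← mul_assoc, ZMod.inv_mul_of_unit _ hu2, one_mul]
    _ = 0 := by rw [h2, mul_zero]

lemma s3_eq_zero (hp : p.Prime) (h7 : 7 ≤ p) :
    ∑ i ∈ Icc 1 (p - 1), ((i : ℕ) : ZMod (p ^ 2))⁻¹ ^ 3 = 0 := by
  have h2p := hp.two_le
  have hp2 : ((p : ℕ) : ZMod (p ^ 2)) ^ 2 = 0 := by
    rw [← Nat.cast_pow, ZMod.natCast_self]
  set S3 := ∑ i ∈ Icc 1 (p - 1), ((i : ℕ) : ZMod (p ^ 2))⁻¹ ^ 3 with hS3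
  have key : ∀ i ∈ Icc 1 (p - 1),
      ((i : ℕ) : ZMod (p ^ 2))⁻¹ ^ 3 + ((p - i : ℕ) : ZMod (p ^ 2))⁻¹ ^ 3
        = -(3 * (p : ZMod (p ^ 2)) * ((i : ℕ) : ZMod (p ^ 2))⁻¹ ^ 4) := by
    intro i hi
    simp only [mem_Icc] at hi
    rw [reflect_inv hp hi.1 hi.2]
    linear_combination (-(3 * ((i : ℕ) : ZMod (p ^ 2))⁻¹ ^ 5)
      - (p : ZMod (p ^ 2)) * ((i : ℕ) : ZMod (p ^ 2))⁻¹ ^ 6) * hp2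
  have h2 : ((2 : ℕ) : ZMod (p ^ 2)) * S3
      = -(3 * ((p : ZMod (p ^ 2)) * ∑ i ∈ Icc 1 (p - 1), ((i : ℕ) : ZMod (p ^ 2))⁻¹ ^ 4)) := by
    calc ((2 : ℕ) : ZMod (p ^ 2)) * S3
        = S3 + ∑ i ∈ Icc 1 (p - 1), ((p - i : ℕ) : ZMod (p ^ 2))⁻¹ ^ 3 := by
          rw [hS3, ← sum_reflect h2p (fun i => ((i : ℕ) : ZMod (p ^ 2))⁻¹ ^ 3)]; push_cast; ring
      _ = ∑ i ∈ Icc 1 (p - 1),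
            (((i : ℕ) : ZMod (p ^ 2))⁻¹ ^ 3 + ((p - i : ℕ) : ZMod (p ^ 2))⁻¹ ^ 3) := by
          rw [sum_add_distrib]
      _ = ∑ i ∈ Icc 1 (p - 1), -(3 * (p : ZMod (p ^ 2)) * ((i : ℕ) : ZMod (p ^ 2))⁻¹ ^ 4) :=
          sum_congr rfl key
      _ = -(3 * ((p : ZMod (p ^ 2)) * ∑ i ∈ Icc 1 (p - 1), ((i : ℕ) : ZMod (p ^ 2))⁻¹ ^ 4)) := by
          rw [sum_neg_distrib, ← mul_sum, mul_assoc]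
  rw [p_mul_s_pow hp h7 (by norm_num) (by omega), mul_zero, neg_zero] at h2
  have hu2 : IsUnit ((2 : ℕ) : ZMod (p ^ 2)) := by
    rw [ZMod.isUnit_iff_coprime]
    exact Nat.Coprime.pow_right 2
      ((hp.coprime_iff_not_dvd.mpr (fun h => by have := Nat.le_of_dvd (by norm_num) h; omega)).symm)
  calc S3 = ((2 : ℕ) : ZMod (p ^ 2))⁻¹ * (((2 : ℕ) : ZMod (p ^ 2)) * S3) := by
        rw [← mul_assoc, ZMod.inv_mul_of_unit _ hu2, one_mul]
    _ = 0 := by rw [h2, mul_zero]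

end Main

theorem e3_inv_sum_mod_p_sq (p : ℕ) (hp : p.Prime) (h7 : 7 ≤ p) :
    ∑ i ∈ Finset.Icc 1 (p - 1), ∑ j ∈ Finset.Icc (i + 1) (p - 1),
      ∑ k ∈ Finset.Icc (j + 1) (p - 1),
        ((i * j * k : ℕ) : ZMod (p ^ 2))⁻¹ = 0 := by
  have h2p := hp.two_le
  have hterm : ∑ i ∈ Finset.Icc 1 (p - 1), ∑ j ∈ Finset.Icc (i + 1) (p - 1),
      ∑ k ∈ Finset.Icc (j + 1) (p - 1), ((i * j * k : ℕ) : ZMod (p ^ 2))⁻¹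
      = ∑ i ∈ Icc 1 (p - 1), ∑ j ∈ Icc (i + 1) (p - 1), ∑ k ∈ Icc (j + 1) (p - 1),
        ((i : ℕ) : ZMod (p ^ 2))⁻¹ * ((j : ℕ) : ZMod (p ^ 2))⁻¹ * ((k : ℕ) : ZMod (p ^ 2))⁻¹ := by
    refine sum_congr rfl fun i hi => sum_congr rfl fun j hj => sum_congr rfl fun k hk => ?_
    simp only [mem_Icc] at hi hj hk
    have hui := unit_sq hp hi.1 hi.2
    have huj := unit_sq hp (by omega : 1 ≤ j) hj.2
    have huk := unit_sq hp (by omega : 1 ≤ k) hk.2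
    rw [Nat.cast_mul, Nat.cast_mul, zmod_mul_inv (hui.mul huj) huk, zmod_mul_inv hui huj]
  rw [hterm]
  have h6 := e3_id (fun i => ((i : ℕ) : ZMod (p ^ 2))⁻¹) (p - 1)
  rw [s1_eq_zero hp h7, s3_eq_zero hp h7] at h6
  have h6' : ((6 : ℕ) : ZMod (p ^ 2)) * (∑ i ∈ Icc 1 (p - 1), ∑ j ∈ Icc (i + 1) (p - 1),
      ∑ k ∈ Icc (j + 1) (p - 1),
        ((i : ℕ) : ZMod (p ^ 2))⁻¹ * ((j : ℕ) : ZMod (p ^ 2))⁻¹ * ((k : ℕ) : ZMod (p ^ 2))⁻¹)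
      = 0 := by
    push_cast
    linear_combination h6
  have hu6 : IsUnit ((6 : ℕ) : ZMod (p ^ 2)) := by
    rw [ZMod.isUnit_iff_coprime]
    exact Nat.Coprime.pow_right 2
      ((hp.coprime_iff_not_dvd.mpr (fun h => by have := Nat.le_of_dvd (by norm_num) h; omega)).symm)
  calc ∑ i ∈ Icc 1 (p - 1), ∑ j ∈ Icc (i + 1) (p - 1), ∑ k ∈ Icc (j + 1) (p - 1),
        ((i : ℕ) : ZMod (p ^ 2))⁻¹ * ((j : ℕ) : ZMod (p ^ 2))⁻¹ * ((k : ℕ) : ZMod (p ^ 2))⁻¹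
      = ((6 : ℕ) : ZMod (p ^ 2))⁻¹ * (((6 : ℕ) : ZMod (p ^ 2)) * _) := by
        rw [← mul_assoc, ZMod.inv_mul_of_unit _ hu6, one_mul]
    _ = 0 := by rw [h6', mul_zero]
end

section
/- For every prime p ≥ 7, (2p-1 choose p-1) ≡ 1 - p² · ∑_{i=1}^{p-1} 1/i² (mod p⁵), where 1/i² denotes the inverse of i² modulo p⁵ (or the congruence is stated for the rational number cleared of denominators). -/
open Finset

private lemma asc_prod (n : ℕ) : ∀ k, n.ascFactorial k = ∏ i ∈ range k, (n + i)
  | 0 => by simp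
  | (k + 1) => by
      rw [Nat.ascFactorial_succ, prod_range_succ, ← asc_prod n k, Nat.mul_comm]

/-- Expansion of a product of `1 + q^2 * u i` modulo high powers of `q`, with `q^5 = 0`. -/
private lemma expand_prod {R : Type*} [CommRing R] (q : R) (hq : q ^ 5 = 0)
    (u : ℕ → R) (s : Finset ℕ) :
    ∃ c : R, ∏ i ∈ s, (1 + q ^ 2 * u i) = 1 + q ^ 2 * ∑ i ∈ s, u i + c ∧
      (∃ d, c = q ^ 4 * d) ∧
      2 * c = (q ^ 2 * ∑ i ∈ s, u i) ^ 2 - ∑ i ∈ s, (q ^ 2 * u i) ^ 2 := by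
  classical
  induction s using Finset.induction with
  | empty => exact ⟨0, by simp, ⟨0, by simp⟩, by simp⟩
  | @insert k s hks ih =>
    obtain ⟨c, hc, ⟨d, hd⟩, h2c⟩ := ih
    refine ⟨c + (q ^ 2 * u k) * (q ^ 2 * ∑ i ∈ s, u i), ?_, ?_, ?_⟩
    · rw [prod_insert hks, hc, sum_insert hks]
      have hac : (q ^ 2 * u k) * c = 0 := by
        rw [hd]
        have : q ^ 2 * u k * (q ^ 4 * d) = q ^ 5 * (q * (u k * d)) := by ring
        rw [this, hq, zero_mul]
      have := hac
      ring_nf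
      ring_nf at this
      linear_combination this
    · exact ⟨d + u k * ∑ i ∈ s, u i, by rw [hd]; ring⟩
    · rw [sum_insert hks, sum_insert hks]
      linear_combination h2c

private lemma sum_inv_pow_eq_zero (p : ℕ) (hp : p.Prime) (h7 : 7 ≤ p) {k : ℕ}
    (hk0 : k ≠ 0) (hk : k < p - 1) :
    ∑ i ∈ Icc 1 (p - 1), ((i : ZMod p)⁻¹) ^ k = 0 := by
  haveI : Fact p.Prime := ⟨hp⟩
  have h2 : 2 ≤ p := hp.two_le
  have step1 : ∑ i ∈ Icc 1 (p - 1), ((i : ZMod p)⁻¹) ^ k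
      = ∑ x ∈ univ \ {(0 : ZMod p)}, (x⁻¹) ^ k := by
    apply Finset.sum_nbij' (fun i : ℕ => ((i : ZMod p))) (fun x : ZMod p => x.val)
    · intro a ha
      simp only [mem_Icc] at ha
      simp only [mem_sdiff, mem_univ, mem_singleton, true_and]
      intro h0
      have := (ZMod.natCast_eq_zero_iff a p).mp h0
      have := Nat.le_of_dvd (by omega) this
      omega
    · intro x hx
      simp only [mem_sdiff, mem_univ, mem_singleton, true_and] at hx
      simp only [mem_Icc]
      have h1 : x.val < p := ZMod.val_lt x
      have h2' : x.val ≠ 0 := fun h => hx (by rwa [ZMod.val_eq_zero] at h)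
      omega
    · intro a ha
      simp only [mem_Icc] at ha
      exact ZMod.val_cast_of_lt (by omega)
    · intro x _
      exact ZMod.natCast_zmod_val x
    · intro a _
      rfl
  have step2 : ∑ x ∈ univ \ {(0 : ZMod p)}, (x⁻¹) ^ k
      = ∑ x ∈ univ \ {(0 : ZMod p)}, x ^ k := by
    apply Finset.sum_nbij' (fun x => x⁻¹) (fun x => x⁻¹)
    · intro a ha
      simp only [mem_sdiff, mem_univ, mem_singleton, true_and] at ha ⊢
      exact inv_ne_zero ha
    · intro a ha
      simp only [mem_sdiff, mem_univ, mem_singleton, true_and] at ha ⊢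
      exact inv_ne_zero ha
    · intro a _; exact inv_inv a
    · intro a _; exact inv_inv a
    · intro a _; rfl
  have step3 : ∑ x ∈ univ \ {(0 : ZMod p)}, x ^ k = ∑ x : ZMod p, x ^ k := by
    rw [sdiff_singleton_eq_erase]
    exact Finset.sum_erase _ (by rw [zero_pow hk0])
  rw [step1, step2, step3]
  apply FiniteField.sum_pow_lt_card_sub_one
  rwa [ZMod.card]

private lemma half_sum_eq_zero (p m : ℕ) (hp : p.Prime) (h7 : 7 ≤ p) (hm : p = 2 * m + 1)
    {k : ℕ} (hk0 : k ≠ 0) (hk : k < p - 1) (hke : Even k) :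
    ∑ i ∈ Ioc 0 m, ((i : ZMod p)⁻¹) ^ k = 0 := by
  haveI : Fact p.Prime := ⟨hp⟩
  have hfull := sum_inv_pow_eq_zero p hp h7 hk0 hk
  have hsplit : (∑ i ∈ Ioc 0 m, ((i : ZMod p)⁻¹) ^ k)
      + ∑ i ∈ Ioc m (p - 1), ((i : ZMod p)⁻¹) ^ k
      = ∑ i ∈ Icc 1 (p - 1), ((i : ZMod p)⁻¹) ^ k := by
    have hIcc : Icc 1 (p - 1) = Ioc 0 (p - 1) := by rw [← Finset.Icc_add_one_left_eq_Ioc, zero_add]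
    rw [hIcc]
    exact Finset.sum_Ioc_consecutive _ (Nat.zero_le m) (by omega)
  have hsecond : ∑ i ∈ Ioc m (p - 1), ((i : ZMod p)⁻¹) ^ k
      = ∑ i ∈ Ioc 0 m, ((i : ZMod p)⁻¹) ^ k := by
    apply Finset.sum_nbij' (fun i => p - i) (fun i => p - i)
    · intro a ha; simp only [mem_Ioc] at ha ⊢; omega
    · intro a ha; simp only [mem_Ioc] at ha ⊢; omega
    · intro a ha; simp only [mem_Ioc] at ha; omega
    · intro a ha; simp only [mem_Ioc] at ha; omega
    · intro a ha
      simp only [mem_Ioc] at ha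
      have hcast : ((p - (p - a) : ℕ) : ZMod p) = (a : ZMod p) := by
        congr 1; omega
      have hcast2 : ((p - a : ℕ) : ZMod p) = -(a : ZMod p) := by
        rw [Nat.cast_sub (by omega), ZMod.natCast_self, zero_sub]
      rw [hcast2, inv_neg, hke.neg_pow]
  rw [← hsplit, hsecond] at hfull
  have h2ne : (2 : ZMod p) ≠ 0 := by
    intro h
    have := (ZMod.natCast_eq_zero_iff 2 p).mp (by exact_mod_cast h)
    have := Nat.le_of_dvd (by norm_num) this
    omega
  have : (2 : ZMod p) * ∑ i ∈ Ioc 0 m, ((i : ZMod p)⁻¹) ^ k = 0 := by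
    linear_combination hfull
  exact (mul_eq_zero.mp this).resolve_left h2ne

theorem mcintosh_formula (p : ℕ) (hp : p.Prime) (h7 : 7 ≤ p) :
    ((Nat.choose (2 * p - 1) (p - 1) : ZMod (p ^ 5)))
      = 1 - (p : ZMod (p ^ 5)) ^ 2 *
          ∑ i ∈ Finset.Icc 1 (p - 1), ((i : ZMod (p ^ 5)) ^ 2)⁻¹ := by
  haveI : Fact p.Prime := ⟨hp⟩
  haveI : NeZero (p ^ 5) := ⟨pow_ne_zero 5 hp.pos.ne'⟩
  set R := ZMod (p ^ 5) with hR
  obtain ⟨m, hm⟩ : ∃ m, p = 2 * m + 1 := by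
    have hodd : p % 2 = 1 := Nat.odd_iff.mp (hp.odd_of_ne_two (by omega))
    exact ⟨p / 2, by omega⟩
  have hp5 : (p : R) ^ 5 = 0 := by
    rw [← Nat.cast_pow, ZMod.natCast_self]
  -- all i in range are units
  have hu : ∀ i ∈ Icc 1 (p - 1), (i : R) * (i : R)⁻¹ = 1 := by
    intro i hi
    simp only [mem_Icc] at hi
    apply ZMod.mul_inv_of_unit
    rw [ZMod.isUnit_iff_coprime]
    apply Nat.Coprime.pow_right
    apply Nat.coprime_comm.mp
    apply (Nat.Prime.coprime_iff_not_dvd hp).mpr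
    intro h
    have := Nat.le_of_dvd (by omega) h
    omega
  -- the cast homomorphism to ZMod p
  set φ : R →+* ZMod p := ZMod.castHom (dvd_pow_self p (by norm_num : (5:ℕ) ≠ 0)) (ZMod p)
    with hφ
  have hdvd : ∀ x : R, φ x = 0 → ∃ c, x = (p : R) * c := by
    intro x hx
    have hxval : ((x.val : ℕ) : R) = x := ZMod.natCast_zmod_val x
    rw [← hxval, map_natCast] at hx
    obtain ⟨c, hc⟩ := (ZMod.natCast_eq_zero_iff _ _).mp hx
    refine ⟨(c : R), ?_⟩
    rw [← hxval, hc]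
    push_cast
    ring
  have hinvmap : ∀ i ∈ Icc 1 (p - 1), φ ((i : R)⁻¹) = ((i : ZMod p))⁻¹ := by
    intro i hi
    have h1 := hu i hi
    have h2 : (i : ZMod p) * φ ((i : R)⁻¹) = 1 := by
      rw [← map_natCast φ, ← map_mul, h1, map_one]
    exact (inv_eq_of_mul_eq_one_right h2).symm
  -- Step A: ℕ identity
  have hnat : Nat.factorial (p - 1) * Nat.choose (2 * p - 1) (p - 1) = ∏ i ∈ Icc 1 (p - 1), (p + i) := by
    have h1 := Nat.ascFactorial_eq_factorial_mul_choose p (p - 1)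
    have h2 : p + (p - 1) = 2 * p - 1 := by omega
    rw [h2] at h1
    rw [← h1, asc_prod]
    apply Finset.prod_nbij' (fun i : ℕ => i + 1) (fun j : ℕ => j - 1)
    · intro a ha; simp only [mem_range] at ha; simp only [mem_Icc]; omega
    · intro a ha; simp only [mem_Icc] at ha; simp only [mem_range]; omega
    · intro a _; omega
    · intro a ha; simp only [mem_Icc] at ha; omega
    · intro a _; omega
  -- factorial as product
  have hfacprod : ∏ i ∈ Icc 1 (p - 1), i = Nat.factorial (p - 1) := by
    rw [← prod_range_add_one_eq_factorial]
    apply Finset.prod_nbij' (fun j : ℕ => j - 1) (fun i : ℕ => i + 1)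
    · intro a ha; simp only [mem_Icc] at ha; simp only [mem_range]; omega
    · intro a ha; simp only [mem_range] at ha; simp only [mem_Icc]; omega
    · intro a ha; simp only [mem_Icc] at ha; omega
    · intro a _; omega
    · intro a ha; simp only [mem_Icc] at ha; omega
  have hfacU : IsUnit ((Nat.factorial (p - 1) : ℕ) : R) := by
    rw [ZMod.isUnit_iff_coprime]
    apply Nat.Coprime.pow_right
    apply Nat.coprime_comm.mp
    apply (Nat.Prime.coprime_iff_not_dvd hp).mpr
    intro h
    have := (Nat.Prime.dvd_factorial hp).mp h
    omega
  -- Step C: choose as product of (1 + p/i)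
  have hC : ((Nat.choose (2 * p - 1) (p - 1) : ℕ) : R)
      = ∏ i ∈ Icc 1 (p - 1), (1 + (p : R) * (i : R)⁻¹) := by
    apply hfacU.mul_left_cancel
    have hcast : ((Nat.factorial (p - 1) : ℕ) : R) * ((Nat.choose (2 * p - 1) (p - 1) : ℕ) : R)
        = ∏ i ∈ Icc 1 (p - 1), ((p : R) + (i : R)) := by
      rw [← Nat.cast_mul, hnat, Nat.cast_prod]
      push_cast
      rfl
    rw [hcast]
    calc ∏ i ∈ Icc 1 (p - 1), ((p : R) + (i : R))
        = ∏ i ∈ Icc 1 (p - 1), ((i : R) * (1 + (p : R) * (i : R)⁻¹)) := by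
          apply Finset.prod_congr rfl
          intro i hi
          have h1 := hu i hi
          linear_combination (-(p : R)) * h1
      _ = (∏ i ∈ Icc 1 (p - 1), (i : R)) * ∏ i ∈ Icc 1 (p - 1), (1 + (p : R) * (i : R)⁻¹) :=
          Finset.prod_mul_distrib
      _ = ((Nat.factorial (p - 1) : ℕ) : R) * ∏ i ∈ Icc 1 (p - 1), (1 + (p : R) * (i : R)⁻¹) := by
          rw [← Nat.cast_prod, hfacprod]
  -- key pair identities
  have hmem1 : ∀ i ∈ Ioc 0 m, i ∈ Icc 1 (p - 1) := by
    intro i hi; simp only [mem_Ioc] at hi; simp only [mem_Icc]; omega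
  have hmem2 : ∀ i ∈ Ioc 0 m, p - i ∈ Icc 1 (p - 1) := by
    intro i hi; simp only [mem_Ioc] at hi; simp only [mem_Icc]; omega
  have hxy : ∀ i ∈ Ioc 0 m,
      (i : R)⁻¹ + ((p - i : ℕ) : R)⁻¹ = (p : R) * ((i : R)⁻¹ * ((p - i : ℕ) : R)⁻¹) := by
    intro i hi
    have h1 := hu i (hmem1 i hi)
    have h2 := hu (p - i) (hmem2 i hi)
    have h3 : (i : R) + ((p - i : ℕ) : R) = (p : R) := by
      rw [← Nat.cast_add]
      congr 1
      simp only [mem_Ioc] at hi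
      omega
    rw [← h3]
    linear_combination (-((i : R)⁻¹)) * h2 + (-(((p - i : ℕ) : R)⁻¹)) * h1
  have hpair : ∀ i ∈ Ioc 0 m,
      (1 + (p : R) * (i : R)⁻¹) * (1 + (p : R) * ((p - i : ℕ) : R)⁻¹)
        = 1 + (p : R) ^ 2 * (2 * ((i : R)⁻¹ * ((p - i : ℕ) : R)⁻¹)) := by
    intro i hi
    linear_combination (p : R) * hxy i hi
  -- Step D: split product into paired halves
  have hsplitP : ∏ i ∈ Icc 1 (p - 1), (1 + (p : R) * (i : R)⁻¹)
      = ∏ i ∈ Ioc 0 m, (1 + (p : R) ^ 2 * (2 * ((i : R)⁻¹ * ((p - i : ℕ) : R)⁻¹))) := by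
    have hIcc : Icc 1 (p - 1) = Ioc 0 (p - 1) := by rw [← Finset.Icc_add_one_left_eq_Ioc, zero_add]
    rw [hIcc]
    calc ∏ i ∈ Ioc 0 (p - 1), (1 + (p : R) * (i : R)⁻¹)
        = (∏ i ∈ Ioc 0 m, (1 + (p : R) * (i : R)⁻¹))
            * ∏ i ∈ Ioc m (p - 1), (1 + (p : R) * (i : R)⁻¹) := by
          rw [Finset.prod_Ioc_consecutive _ (Nat.zero_le m) (by omega)]
      _ = (∏ i ∈ Ioc 0 m, (1 + (p : R) * (i : R)⁻¹))
            * ∏ i ∈ Ioc 0 m, (1 + (p : R) * ((p - i : ℕ) : R)⁻¹) := by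
          congr 1
          apply Finset.prod_nbij' (fun i => p - i) (fun i => p - i)
          · intro a ha; simp only [mem_Ioc] at ha ⊢; omega
          · intro a ha; simp only [mem_Ioc] at ha ⊢; omega
          · intro a ha; simp only [mem_Ioc] at ha; omega
          · intro a ha; simp only [mem_Ioc] at ha; omega
          · intro a ha
            simp only [mem_Ioc] at ha
            have : p - (p - a) = a := by omega
            rw [this]
      _ = ∏ i ∈ Ioc 0 m, (1 + (p : R) ^ 2 * (2 * ((i : R)⁻¹ * ((p - i : ℕ) : R)⁻¹))) := by
          rw [← Finset.prod_mul_distrib]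
          exact Finset.prod_congr rfl hpair
  -- divisibility facts
  have hhalf2 : ∑ i ∈ Ioc 0 m, ((i : ZMod p)⁻¹) ^ 2 = 0 :=
    half_sum_eq_zero p m hp h7 hm (by norm_num) (by omega) ⟨1, rfl⟩
  have hhalf4 : ∑ i ∈ Ioc 0 m, ((i : ZMod p)⁻¹) ^ 4 = 0 :=
    half_sum_eq_zero p m hp h7 hm (by norm_num) (by omega) ⟨2, rfl⟩
  have hcastneg : ∀ i ∈ Ioc 0 m, ((p - i : ℕ) : ZMod p) = -(i : ZMod p) := by
    intro i hi
    simp only [mem_Ioc] at hi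
    rw [Nat.cast_sub (by omega), ZMod.natCast_self, zero_sub]
  have hphit : ∀ i ∈ Ioc 0 m,
      φ ((i : R)⁻¹ * ((p - i : ℕ) : R)⁻¹) = -(((i : ZMod p)⁻¹) ^ 2) := by
    intro i hi
    rw [map_mul, hinvmap i (hmem1 i hi), hinvmap (p - i) (hmem2 i hi), hcastneg i hi,
      inv_neg]
    ring
  have hS : ∃ a, (∑ i ∈ Ioc 0 m, ((i : R)⁻¹ * ((p - i : ℕ) : R)⁻¹)) = (p : R) * a := by
    apply hdvd
    rw [map_sum]
    rw [Finset.sum_congr rfl hphit, Finset.sum_neg_distrib]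
    rw [hhalf2, neg_zero]
  have hS2 : ∃ b, (∑ i ∈ Ioc 0 m, ((i : R)⁻¹ * ((p - i : ℕ) : R)⁻¹) ^ 2) = (p : R) * b := by
    apply hdvd
    rw [map_sum]
    have : ∀ i ∈ Ioc 0 m, φ (((i : R)⁻¹ * ((p - i : ℕ) : R)⁻¹) ^ 2) = ((i : ZMod p)⁻¹) ^ 4 := by
      intro i hi
      rw [map_pow, hphit i hi]
      ring
    rw [Finset.sum_congr rfl this, hhalf4]
  obtain ⟨a, ha⟩ := hS
  obtain ⟨b, hb⟩ := hS2
  -- Step E: expansion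
  obtain ⟨c, hcprod, ⟨d, hd⟩, h2c⟩ := expand_prod (p : R) hp5
    (fun i => 2 * ((i : R)⁻¹ * ((p - i : ℕ) : R)⁻¹)) (Ioc 0 m)
  have hc0 : c = 0 := by
    have h2u : IsUnit (2 : R) := by
      have : ((2 : ℕ) : R) = (2 : R) := by norm_num
      rw [← this, ZMod.isUnit_iff_coprime]
      apply Nat.Coprime.pow_right
      apply Nat.coprime_comm.mp
      apply (Nat.Prime.coprime_iff_not_dvd hp).mpr
      intro h
      have := Nat.le_of_dvd (by norm_num) h
      omega
    apply h2u.mul_left_cancel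
    rw [mul_zero, h2c, ← Finset.mul_sum, ha]
    have hsq : ∀ i ∈ Ioc 0 m,
        ((p : R) ^ 2 * (2 * ((i : R)⁻¹ * ((p - i : ℕ) : R)⁻¹))) ^ 2
          = 4 * (p : R) ^ 4 * (((i : R)⁻¹ * ((p - i : ℕ) : R)⁻¹) ^ 2) := by
      intro i _
      ring
    rw [Finset.sum_congr rfl hsq, ← Finset.mul_sum, hb]
    linear_combination (4 * (p : R) * a ^ 2 - 4 * b) * hp5
  -- inverse of square = square of inverse
  have hinv2 : ∀ i ∈ Icc 1 (p - 1), ((i : R) ^ 2)⁻¹ = ((i : R)⁻¹) ^ 2 := by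
    intro i hi
    have h1 := hu i hi
    have hsq : (i : R) ^ 2 * ((i : R)⁻¹) ^ 2 = 1 := by
      rw [← mul_pow, h1, one_pow]
    have hsqU : IsUnit ((i : R) ^ 2) := IsUnit.of_mul_eq_one _ hsq
    apply hsqU.mul_left_cancel
    rw [hsq, ZMod.mul_inv_of_unit _ hsqU]
  -- split the target sum
  have hsum2 : ∑ i ∈ Icc 1 (p - 1), ((i : R)⁻¹) ^ 2
      = ∑ i ∈ Ioc 0 m, (((i : R)⁻¹) ^ 2 + (((p - i : ℕ) : R)⁻¹) ^ 2) := by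
    have hIcc : Icc 1 (p - 1) = Ioc 0 (p - 1) := by rw [← Finset.Icc_add_one_left_eq_Ioc, zero_add]
    rw [hIcc, Finset.sum_add_distrib]
    rw [← Finset.sum_Ioc_consecutive _ (Nat.zero_le m) (show m ≤ p - 1 by omega)]
    congr 1
    apply Finset.sum_nbij' (fun i => p - i) (fun i => p - i)
    · intro a' ha'; simp only [mem_Ioc] at ha' ⊢; omega
    · intro a' ha'; simp only [mem_Ioc] at ha' ⊢; omega
    · intro a' ha'; simp only [mem_Ioc] at ha'; omega
    · intro a' ha'; simp only [mem_Ioc] at ha'; omega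
    · intro a' ha'
      simp only [mem_Ioc] at ha'
      have : p - (p - a') = a' := by omega
      rw [this]
  -- per-element identity: 2 t + x^2 + y^2 = p^2 t^2
  have hkey : ∀ i ∈ Ioc 0 m,
      2 * ((i : R)⁻¹ * ((p - i : ℕ) : R)⁻¹) + (((i : R)⁻¹) ^ 2 + (((p - i : ℕ) : R)⁻¹) ^ 2)
        = (p : R) ^ 2 * ((i : R)⁻¹ * ((p - i : ℕ) : R)⁻¹) ^ 2 := by
    intro i hi
    have h := hxy i hi
    linear_combination ((i : R)⁻¹ + ((p - i : ℕ) : R)⁻¹ + (p:R) * ((i : R)⁻¹ * ((p - i : ℕ) : R)⁻¹)) * h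
  -- final assembly
  rw [Finset.sum_congr rfl hinv2, hsum2]
  rw [hC, hsplitP, hcprod, hc0, add_zero]
  have hfin : (p : R) ^ 2 * (∑ i ∈ Ioc 0 m, 2 * ((i : R)⁻¹ * ((p - i : ℕ) : R)⁻¹))
      + (p : R) ^ 2 * ∑ i ∈ Ioc 0 m, (((i : R)⁻¹) ^ 2 + (((p - i : ℕ) : R)⁻¹) ^ 2) = 0 := by
    rw [← mul_add, ← Finset.sum_add_distrib]
    rw [Finset.sum_congr rfl hkey]
    rw [← Finset.mul_sum, hb]
    have : (p : R) ^ 2 * ((p : R) ^ 2 * ((p : R) * b)) = (p : R) ^ 5 * b := by ring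
    rw [this, hp5, zero_mul]
  linear_combination hfin
end

section
/- For every prime p ≥ 7, 2·∑_{i=1}^{p-1} 1/i ≡ -p·∑_{i=1}^{p-1} 1/i² - p²·∑_{i=1}^{p-1} 1/i³ + p³·∑_{i=1}^{p-1} 1/((p-i)i³), as a congruence modulo p⁵ (all inverses taken modulo p⁵). -/
lemma term_identity (p : ℕ) (hp : p.Prime) (i : ℕ) (h1 : 1 ≤ i) (h2 : i ≤ p - 1) :
    ((i : ZMod (p ^ 5)))⁻¹ + (((p - i : ℕ)) : ZMod (p ^ 5))⁻¹
      = - (p : ZMod (p ^ 5)) * ((i : ZMod (p ^ 5)) ^ 2)⁻¹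
        - (p : ZMod (p ^ 5)) ^ 2 * ((i : ZMod (p ^ 5)) ^ 3)⁻¹
        + (p : ZMod (p ^ 5)) ^ 3 * ((((p - i) * i ^ 3 : ℕ)) : ZMod (p ^ 5))⁻¹ := by
  haveI : NeZero (p ^ 5) := ⟨pow_ne_zero 5 hp.pos.ne'⟩
  have hip : i < p := by have := hp.one_lt; omega
  have hpi1 : 1 ≤ p - i := by omega
  have hcop : ∀ m : ℕ, 0 < m → m < p → Nat.Coprime m (p ^ 5) := fun m hm0 hmp =>
    Nat.Coprime.pow_right 5
      (Nat.coprime_comm.mp (hp.coprime_iff_not_dvd.mpr (Nat.not_dvd_of_pos_of_lt hm0 hmp)))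
  set a : ZMod (p ^ 5) := (i : ZMod (p ^ 5)) with ha_def
  set b : ZMod (p ^ 5) := ((p - i : ℕ) : ZMod (p ^ 5)) with hb_def
  have hua : IsUnit a := (ZMod.isUnit_iff_coprime i (p ^ 5)).mpr (hcop i h1 hip)
  have hub : IsUnit b := (ZMod.isUnit_iff_coprime (p - i) (p ^ 5)).mpr (hcop _ hpi1 (by omega))
  have hcast : ((((p - i) * i ^ 3 : ℕ)) : ZMod (p ^ 5)) = b * a ^ 3 := by push_cast; ring
  have hab : b = (p : ZMod (p ^ 5)) - a := by
    have : ((p - i : ℕ) : ZMod (p ^ 5)) = ((p : ℕ) : ZMod (p ^ 5)) - (i : ZMod (p ^ 5)) := by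
      rw [Nat.cast_sub hip.le]
    simpa [hb_def, ha_def] using this
  have e1 : a * a⁻¹ = 1 := ZMod.mul_inv_of_unit a hua
  have e2 : b * b⁻¹ = 1 := ZMod.mul_inv_of_unit b hub
  have e3 : a ^ 2 * (a ^ 2)⁻¹ = 1 := ZMod.mul_inv_of_unit _ (hua.pow 2)
  have e4 : a ^ 3 * (a ^ 3)⁻¹ = 1 := ZMod.mul_inv_of_unit _ (hua.pow 3)
  have e5 : (b * a ^ 3) * (b * a ^ 3)⁻¹ = 1 := ZMod.mul_inv_of_unit _ (hub.mul (hua.pow 3))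
  rw [hcast]
  have hu : IsUnit (a ^ 3 * b) := (hua.pow 3).mul hub
  apply hu.mul_left_cancel
  linear_combination (a ^ 2 * b) * e1 + a ^ 3 * e2 + ((p : ZMod (p ^ 5)) * a * b) * e3
    + ((p : ZMod (p ^ 5)) ^ 2 * b) * e4 - (p : ZMod (p ^ 5)) ^ 3 * e5
    + (a ^ 2 + (p : ZMod (p ^ 5)) * a + (p : ZMod (p ^ 5)) ^ 2) * hab

theorem inverse_sum_identity (p : ℕ) (hp : p.Prime) (h7 : 7 ≤ p) :
    2 * ∑ i ∈ Finset.Icc 1 (p - 1), ((i : ZMod (p ^ 5)))⁻¹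
      = - (p : ZMod (p ^ 5)) * ∑ i ∈ Finset.Icc 1 (p - 1), ((i : ZMod (p ^ 5)) ^ 2)⁻¹
        - (p : ZMod (p ^ 5)) ^ 2 * ∑ i ∈ Finset.Icc 1 (p - 1), ((i : ZMod (p ^ 5)) ^ 3)⁻¹
        + (p : ZMod (p ^ 5)) ^ 3 *
            ∑ i ∈ Finset.Icc 1 (p - 1), (((p - i) * i ^ 3 : ℕ) : ZMod (p ^ 5))⁻¹ := by
  have hreindex : ∑ i ∈ Finset.Icc 1 (p - 1), ((i : ZMod (p ^ 5)))⁻¹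
      = ∑ i ∈ Finset.Icc 1 (p - 1), (((p - i : ℕ)) : ZMod (p ^ 5))⁻¹ := by
    have h2p : 2 ≤ p := hp.two_le
    apply Finset.sum_nbij' (fun i => p - i) (fun i => p - i)
    · intro i hi; simp only [Finset.mem_Icc] at *; omega
    · intro i hi; simp only [Finset.mem_Icc] at *; omega
    · intro i hi; simp only [Finset.mem_Icc] at hi; omega
    · intro i hi; simp only [Finset.mem_Icc] at hi; omega
    · intro i hi; simp only [Finset.mem_Icc] at hi
      have h : p - (p - i) = i := by omega
      rw [h]
  have key : ∀ i ∈ Finset.Icc 1 (p - 1),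
      ((i : ZMod (p ^ 5)))⁻¹ + (((p - i : ℕ)) : ZMod (p ^ 5))⁻¹
      = - (p : ZMod (p ^ 5)) * ((i : ZMod (p ^ 5)) ^ 2)⁻¹
        - (p : ZMod (p ^ 5)) ^ 2 * ((i : ZMod (p ^ 5)) ^ 3)⁻¹
        + (p : ZMod (p ^ 5)) ^ 3 * ((((p - i) * i ^ 3 : ℕ)) : ZMod (p ^ 5))⁻¹ := by
    intro i hi
    simp only [Finset.mem_Icc] at hi
    exact term_identity p hp i hi.1 hi.2
  calc 2 * ∑ i ∈ Finset.Icc 1 (p - 1), ((i : ZMod (p ^ 5)))⁻¹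
      = ∑ i ∈ Finset.Icc 1 (p - 1),
          (((i : ZMod (p ^ 5)))⁻¹ + (((p - i : ℕ)) : ZMod (p ^ 5))⁻¹) := by
        rw [Finset.sum_add_distrib, ← hreindex]; ring
    _ = ∑ i ∈ Finset.Icc 1 (p - 1),
          (- (p : ZMod (p ^ 5)) * ((i : ZMod (p ^ 5)) ^ 2)⁻¹
            - (p : ZMod (p ^ 5)) ^ 2 * ((i : ZMod (p ^ 5)) ^ 3)⁻¹
            + (p : ZMod (p ^ 5)) ^ 3 * ((((p - i) * i ^ 3 : ℕ)) : ZMod (p ^ 5))⁻¹) :=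
        Finset.sum_congr rfl key
    _ = _ := by
        simp only [Finset.sum_add_distrib, Finset.sum_sub_distrib, ← Finset.mul_sum]
end

section
/- For every prime p ≥ 7, (2p-1 choose p-1) ≡ 1 (mod p⁵) if and only if ∑_{i=1}^{p-1} 1/i² ≡ 0 (mod p³), inverses taken modulo p³. -/
open Finset

lemma zmod_inv_eq {n : ℕ} {x y : ZMod n} (h : x * y = 1) : x⁻¹ = y := by
  have hu : IsUnit x := IsUnit.of_mul_eq_one _ h
  calc x⁻¹ = x⁻¹ * (x * y) := by rw [h, mul_one]
    _ = x⁻¹ * x * y := (mul_assoc _ _ _).symm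
    _ = y := by rw [ZMod.inv_mul_of_unit _ hu, one_mul]

lemma zmod_cast_inv {n d : ℕ} (h : d ∣ n) (a : ZMod n) (ha : IsUnit a) :
    ZMod.castHom h (ZMod d) a⁻¹ = (ZMod.castHom h (ZMod d) a)⁻¹ := by
  symm
  apply zmod_inv_eq
  rw [← map_mul, ZMod.mul_inv_of_unit a ha, map_one]

lemma prod_one_add_sq {A : Type*} [CommRing A] {q : A} (hq : q^3 = 0) (s : Finset ℕ) (c : ℕ → A) :
    ∃ e : A, (∏ i ∈ s, (1 + q * c i)) = 1 + q * (∑ i ∈ s, c i) + q^2 * e ∧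
      2 * e = (∑ i ∈ s, c i)^2 - ∑ i ∈ s, (c i)^2 := by
  classical
  induction s using Finset.induction with
  | empty => exact ⟨0, by simp, by simp⟩
  | @insert a s h ih =>
    obtain ⟨e, he1, he2⟩ := ih
    refine ⟨e + c a * ∑ i ∈ s, c i, ?_, ?_⟩
    · rw [Finset.prod_insert h, he1, Finset.sum_insert h]
      linear_combination (c a * e) * hq
    · rw [Finset.sum_insert h, Finset.sum_insert h]
      linear_combination he2

@[to_additive]
lemma prod_Icc_halve {M : Type*} [CommMonoid M] (f : ℕ → M) (m : ℕ) :
    ∏ i ∈ Icc 1 (2*m), f i = ∏ i ∈ Icc 1 m, (f i * f (2*m+1-i)) := by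
  rw [Finset.prod_mul_distrib]
  have h0 : ∀ n : ℕ, Icc 1 n = Ioc 0 n := fun n => rfl
  have h1 : ∏ i ∈ Ioc m (2*m), f i = ∏ i ∈ Ioc 0 m, f (2*m+1-i) := by
    refine Finset.prod_nbij' (fun i => 2*m+1-i) (fun j => 2*m+1-j) ?_ ?_ ?_ ?_ ?_
    · intro a ha; simp only [Finset.mem_Ioc] at *; omega
    · intro a ha; simp only [Finset.mem_Ioc] at *; omega
    · intro a ha; simp only [Finset.mem_Ioc] at ha; omega
    · intro a ha; simp only [Finset.mem_Ioc] at ha; omega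
    · intro a ha; simp only [Finset.mem_Ioc] at ha; congr 1; omega
  rw [h0 (2*m), ← Finset.prod_Ioc_consecutive f (Nat.zero_le m) (by omega), h1, ← h0 m]

lemma zmod_isUnit_of_Icc {p : ℕ} (hp : p.Prime) (k : ℕ) {i : ℕ} (h1 : 1 ≤ i) (h2 : i ≤ p - 1) :
    IsUnit ((i : ℕ) : ZMod (p^k)) := by
  haveI : NeZero (p^k) := ⟨pow_ne_zero k hp.pos.ne'⟩
  rw [ZMod.isUnit_iff_coprime]
  have hnd : ¬ p ∣ i := Nat.not_dvd_of_pos_of_lt h1 (by have := hp.two_le; omega)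
  exact Nat.Coprime.pow_right k ((Nat.Prime.coprime_iff_not_dvd hp).mpr hnd).symm

lemma zmod_mul_eq_zero_iff {N c d : ℕ} [NeZero N] (hc : c ≠ 0) (hN : N = c * d)
    (h : d ∣ N) (x : ZMod N) :
    (c : ZMod N) * x = 0 ↔ ZMod.castHom h (ZMod d) x = 0 := by
  subst hN
  have hx : x = ((x.val : ℕ) : ZMod (c*d)) := (ZMod.natCast_zmod_val x).symm
  rw [hx, map_natCast, ← Nat.cast_mul, ZMod.natCast_eq_zero_iff,
    ZMod.natCast_eq_zero_iff]
  exact Nat.mul_dvd_mul_iff_left (Nat.pos_of_ne_zero hc)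

lemma zmod_sum_inv_pow_eq_zero {p : ℕ} (hp : p.Prime) {k : ℕ} (hk0 : k ≠ 0) (hk : k < p - 1) :
    ∑ i ∈ Icc 1 (p-1), ((i : ZMod p)⁻¹)^k = 0 := by
  haveI : Fact p.Prime := ⟨hp⟩
  have h1 : ∑ i ∈ Icc 1 (p-1), ((i : ZMod p)⁻¹)^k
      = ∑ x ∈ (univ : Finset (ZMod p)) \ {0}, (x⁻¹)^k := by
    refine Finset.sum_nbij' (fun i => ((i : ℕ) : ZMod p)) (fun x => x.val) ?_ ?_ ?_ ?_ ?_
    · intro a ha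
      simp only [Finset.mem_Icc] at ha
      simp only [Finset.mem_sdiff, Finset.mem_univ, Finset.mem_singleton, true_and]
      intro hdvd
      rw [ZMod.natCast_eq_zero_iff] at hdvd
      exact Nat.not_dvd_of_pos_of_lt ha.1 (by have := hp.two_le; omega) hdvd
    · intro x hx
      simp only [Finset.mem_sdiff, Finset.mem_univ, Finset.mem_singleton, true_and] at hx
      simp only [Finset.mem_Icc]
      have h0 : x.val ≠ 0 := fun h => hx (by rwa [← ZMod.val_eq_zero])
      have := ZMod.val_lt x
      omega
    · intro a ha
      simp only [Finset.mem_Icc] at ha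
      exact ZMod.val_cast_of_lt (by have := hp.two_le; omega)
    · intro x hx
      exact ZMod.natCast_zmod_val x
    · intro a ha; rfl
  have h2 : ∑ x ∈ (univ : Finset (ZMod p)) \ {0}, (x⁻¹)^k
      = ∑ x ∈ (univ : Finset (ZMod p)) \ {0}, x^k := by
    refine Finset.sum_nbij' (fun x => x⁻¹) (fun x => x⁻¹) ?_ ?_ ?_ ?_ ?_ <;>
      intro a ha <;>
      simp only [Finset.mem_sdiff, Finset.mem_univ, Finset.mem_singleton, true_and] at * <;>
      first
        | exact inv_ne_zero ha
        | exact inv_inv a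
        | rfl
  rw [h1, h2]
  have h3 := Finset.sum_eq_sum_sdiff_singleton_add (Finset.mem_univ (0 : ZMod p))
      (fun x : ZMod p => x^k)
  have h4 : ∑ x : ZMod p, x^k = 0 := by
    have := FiniteField.sum_pow_lt_card_sub_one (K := ZMod p) k (by rwa [ZMod.card])
    exact this
  rw [h4, zero_pow hk0, add_zero] at h3
  exact h3.symm

theorem binom_iff_inv_square (p : ℕ) (hp : p.Prime) (h7 : 7 ≤ p) :
    ((Nat.choose (2 * p - 1) (p - 1) : ZMod (p ^ 5)) = 1) ↔
      (∑ i ∈ Finset.Icc 1 (p - 1), ((i : ZMod (p ^ 3)) ^ 2)⁻¹ = 0) := by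
  haveI : Fact p.Prime := ⟨hp⟩
  haveI : NeZero (p^5) := ⟨pow_ne_zero _ (by omega)⟩
  obtain ⟨m, hm⟩ : ∃ m, p = 2*m+1 := hp.odd_of_ne_two (by omega)
  have hmO : p - 1 = 2*m := by omega
  obtain ⟨a, ha⟩ : ∃ a : ℕ → ZMod (p^5), ∀ i, a i = ((i : ℕ) : ZMod (p^5))⁻¹ :=
    ⟨_, fun _ => rfl⟩
  obtain ⟨c, hc⟩ : ∃ c : ℕ → ZMod (p^5), ∀ i,
      c i = -((a i)^2 + (p : ZMod (p^5))*(a i)^3 + (p : ZMod (p^5))^2*(a i)^4) :=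
    ⟨_, fun _ => rfl⟩
  have hp5 : ((p : ZMod (p^5)))^5 = 0 := by
    rw [← Nat.cast_pow, ZMod.natCast_self]
  have hunit : ∀ i, 1 ≤ i → i ≤ p - 1 → IsUnit ((i : ℕ) : ZMod (p^5)) :=
    fun i h1 h2 => zmod_isUnit_of_Icc hp 5 h1 h2
  have hinv : ∀ i, 1 ≤ i → i ≤ p - 1 → ((i : ℕ) : ZMod (p^5)) * a i = 1 :=
    fun i h1 h2 => by rw [ha i]; exact ZMod.mul_inv_of_unit _ (hunit i h1 h2)
  -- Step A : natural number identity
  have hf : ∀ n : ℕ, ∏ i ∈ Icc 1 n, i = n.factorial := by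
    intro n
    rw [← Finset.Ico_add_one_right_eq_Icc, Finset.prod_Ico_id_eq_factorial]
  have hA : (Nat.choose (2*p-1) (p-1)) * (p-1).factorial = ∏ i ∈ Icc 1 (p-1), (p + i) := by
    have h1 : ∏ i ∈ Icc 1 (p-1), (p + i) = ∏ i ∈ Ioc p (2*p-1), i := by
      refine Finset.prod_nbij' (fun i => p + i) (fun j => j - p) ?_ ?_ ?_ ?_ ?_
      · intro x hx; simp only [Finset.mem_Icc, Finset.mem_Ioc] at *; omega
      · intro x hx; simp only [Finset.mem_Icc, Finset.mem_Ioc] at *; omega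
      · intro x hx; omega
      · intro x hx; simp only [Finset.mem_Ioc] at hx; omega
      · intro x hx; rfl
    have h2 : (∏ i ∈ Ioc 0 p, i) * ∏ i ∈ Ioc p (2*p-1), i = ∏ i ∈ Ioc 0 (2*p-1), i :=
      Finset.prod_Ioc_consecutive _ (Nat.zero_le p) (by omega)
    have h3 := Nat.choose_mul_factorial_mul_factorial (show p-1 ≤ 2*p-1 by omega)
    rw [show 2*p-1-(p-1) = p from by omega] at h3
    have h5 : (Nat.choose (2*p-1) (p-1)) * (p-1).factorial * p.factorial = (∏ i ∈ Icc 1 (p-1), (p + i)) * p.factorial := by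
      rw [h3, h1, ← hf (2*p-1), show Icc 1 (2*p-1) = Ioc 0 (2*p-1) from rfl, ← h2,
        show Ioc 0 p = Icc 1 p from rfl, hf p]
      ring
    exact Nat.eq_of_mul_eq_mul_right (Nat.factorial_pos p) h5
  have hfactR : (((p-1).factorial : ℕ) : ZMod (p^5)) = ∏ i ∈ Icc 1 (p-1), ((i : ℕ) : ZMod (p^5)) := by
    rw [← hf (p-1)]
    push_cast
    rfl
  have hAR : ((Nat.choose (2*p-1) (p-1) : ℕ) : ZMod (p^5)) * ∏ i ∈ Icc 1 (p-1), ((i:ℕ) : ZMod (p^5))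
      = ∏ i ∈ Icc 1 (p-1), ((p : ZMod (p^5)) + i) := by
    have h := congrArg (fun n : ℕ => (n : ZMod (p^5))) hA
    push_cast at h
    rw [← hfactR]
    exact_mod_cast h
  have hsplit : ∏ i ∈ Icc 1 (p-1), ((p : ZMod (p^5)) + i)
      = (∏ i ∈ Icc 1 (p-1), ((i:ℕ) : ZMod (p^5))) * ∏ i ∈ Icc 1 (p-1), (1 + (p : ZMod (p^5)) * a i) := by
    rw [← Finset.prod_mul_distrib]
    refine Finset.prod_congr rfl ?_
    intro i hi
    simp only [Finset.mem_Icc] at hi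
    have h := hinv i hi.1 hi.2
    linear_combination (-(p : ZMod (p^5))) * h
  have hFunit : IsUnit (∏ i ∈ Icc 1 (p-1), ((i:ℕ) : ZMod (p^5))) := by
    refine IsUnit.of_mul_eq_one (∏ i ∈ Icc 1 (p-1), a i) ?_
    rw [← Finset.prod_mul_distrib]
    rw [Finset.prod_congr rfl (fun i hi => by
      simp only [Finset.mem_Icc] at hi
      exact hinv i hi.1 hi.2)]
    exact Finset.prod_const_one
  have hchoose1 : ((Nat.choose (2*p-1) (p-1) : ℕ) : ZMod (p^5))
      = ∏ i ∈ Icc 1 (p-1), (1 + (p : ZMod (p^5)) * a i) :=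
    hFunit.mul_right_cancel ((hAR.trans hsplit).trans (mul_comm _ _))
  -- pairing
  have hb : ∀ i, 1 ≤ i → i ≤ m → a (p - i)
      = -(a i + (p : ZMod (p^5))*(a i)^2 + (p : ZMod (p^5))^2*(a i)^3
          + (p : ZMod (p^5))^3*(a i)^4 + (p : ZMod (p^5))^4*(a i)^5) := by
    intro i h1 h2
    have h := hinv i h1 (by omega)
    rw [ha (p - i)]
    apply zmod_inv_eq
    rw [Nat.cast_sub (by omega : i ≤ p)]
    linear_combination (1 + (p : ZMod (p^5))*a i + (p : ZMod (p^5))^2*(a i)^2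
      + (p : ZMod (p^5))^3*(a i)^3 + (p : ZMod (p^5))^4*(a i)^4) * h - (a i)^5 * hp5
  have hpair : ∀ i, 1 ≤ i → i ≤ m →
      (1 + (p : ZMod (p^5)) * a i) * (1 + (p : ZMod (p^5)) * a (p - i))
        = 1 + 2*(p : ZMod (p^5))^2 * c i := by
    intro i h1 h2
    rw [hb i h1 h2, hc i]
    linear_combination (-2*(a i)^5 - (p : ZMod (p^5))*(a i)^6) * hp5
  have hchoose2 : ((Nat.choose (2*p-1) (p-1) : ℕ) : ZMod (p^5))
      = ∏ i ∈ Icc 1 m, (1 + 2*(p : ZMod (p^5))^2 * c i) := by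
    rw [hchoose1, hmO, prod_Icc_halve (fun j => 1 + (p : ZMod (p^5)) * a j) m]
    refine Finset.prod_congr rfl ?_
    intro i hi
    simp only [Finset.mem_Icc] at hi
    rw [show 2*m+1-i = p - i from by omega]
    exact hpair i hi.1 hi.2
  have hq3 : (2*(p : ZMod (p^5))^2)^3 = 0 := by
    linear_combination (8*(p : ZMod (p^5))) * hp5
  obtain ⟨e, he1, he2⟩ := prod_one_add_sq hq3 (Icc 1 m) c
  have hmain : (p : ZMod (p^5))^2 * (∑ i ∈ Icc 1 (p-1), (a i)^2)
      + 2*(p : ZMod (p^5))^2 * (∑ i ∈ Icc 1 m, c i)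
      = (p : ZMod (p^5))^4 * ∑ i ∈ Icc 1 m, (a i)^4 := by
    rw [hmO, sum_Icc_halve (fun j => (a j)^2) m, Finset.mul_sum, Finset.mul_sum,
      Finset.mul_sum, ← Finset.sum_add_distrib]
    refine Finset.sum_congr rfl ?_
    intro i hi
    simp only [Finset.mem_Icc] at hi
    rw [show 2*m+1-i = p - i from by omega, hb i hi.1 hi.2, hc i]
    linear_combination (4*(a i)^5 + 5*(p : ZMod (p^5))*(a i)^6 + 4*(p : ZMod (p^5))^2*(a i)^7
      + 3*(p : ZMod (p^5))^3*(a i)^8 + 2*(p : ZMod (p^5))^4*(a i)^9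
      + (p : ZMod (p^5))^5*(a i)^10) * hp5
  have hchoose3 : ((Nat.choose (2*p-1) (p-1) : ℕ) : ZMod (p^5))
      = 1 - (p : ZMod (p^5))^2 * (∑ i ∈ Icc 1 (p-1), (a i)^2)
        + (p : ZMod (p^5))^4 * ((∑ i ∈ Icc 1 m, (a i)^4) + 4*e) := by
    rw [hchoose2, he1]
    linear_combination hmain
  -- reduction mod p
  have hdvd1 : p ∣ p^5 := dvd_pow_self p (by norm_num)
  have h2ne : (2 : ZMod p) ≠ 0 := by
    intro h
    have h' : ((2:ℕ) : ZMod p) = 0 := by exact_mod_cast h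
    rw [ZMod.natCast_eq_zero_iff] at h'
    have := Nat.le_of_dvd (by norm_num) h'
    omega
  have hφa : ∀ i, 1 ≤ i → i ≤ p-1 →
      ZMod.castHom hdvd1 (ZMod p) (a i) = ((i : ZMod p))⁻¹ := by
    intro i h1 h2
    rw [ha i, zmod_cast_inv _ _ (hunit i h1 h2), map_natCast]
  have hneg : ∀ i, 1 ≤ i → i ≤ m → (((p - i : ℕ)) : ZMod p)⁻¹ = -((i : ZMod p))⁻¹ := by
    intro i h1 h2
    rw [Nat.cast_sub (by omega : i ≤ p), ZMod.natCast_self, zero_sub, inv_neg]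
  have hhalf : ∀ k : ℕ, k ≠ 0 → k < p - 1 → Even k →
      ∑ i ∈ Icc 1 m, ((i : ZMod p)⁻¹)^k = 0 := by
    intro k hk0 hklt hke
    have hfull := zmod_sum_inv_pow_eq_zero hp hk0 hklt
    rw [hmO, sum_Icc_halve (fun j => ((j : ZMod p)⁻¹)^k) m] at hfull
    have hcongr : ∑ i ∈ Icc 1 m, ((fun j : ℕ => ((j : ZMod p)⁻¹)^k) i + (fun j : ℕ => ((j : ZMod p)⁻¹)^k) (2*m+1-i))
        = 2 * ∑ i ∈ Icc 1 m, ((i : ZMod p))⁻¹^k := by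
      rw [Finset.mul_sum]
      refine Finset.sum_congr rfl ?_
      intro i hi
      simp only [Finset.mem_Icc] at hi
      dsimp only
      rw [show 2*m+1-i = p - i from by omega, hneg i hi.1 hi.2, hke.neg_pow]
      exact (two_mul _).symm
    rw [hcongr] at hfull
    exact (mul_eq_zero.mp hfull).resolve_left h2ne
  have hφc : ∀ i ∈ Icc 1 m, ZMod.castHom hdvd1 (ZMod p) (c i) = -(((i : ZMod p))⁻¹)^2 := by
    intro i hi
    simp only [Finset.mem_Icc] at hi
    rw [hc i]
    rw [map_neg, map_add, map_add, map_mul, map_mul, map_pow, map_pow, map_pow, map_pow,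
      map_natCast, hφa i hi.1 (by omega), ZMod.natCast_self]
    ring
  have hφe : ZMod.castHom hdvd1 (ZMod p) e = 0 := by
    have h := congrArg (ZMod.castHom hdvd1 (ZMod p)) he2
    simp only [map_mul, map_sub, map_pow, map_sum, map_ofNat] at h
    rw [Finset.sum_congr rfl hφc,
      Finset.sum_congr rfl (fun i hi => by rw [hφc i hi] : ∀ i ∈ Icc 1 m,
        (ZMod.castHom hdvd1 (ZMod p) (c i))^2 = (-(((i : ZMod p))⁻¹)^2)^2)] at h
    rw [show (∑ i ∈ Icc 1 m, -(((i : ZMod p))⁻¹)^2) = -∑ i ∈ Icc 1 m, (((i : ZMod p))⁻¹)^2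
        from Finset.sum_neg_distrib _,
      show (∑ i ∈ Icc 1 m, (-(((i : ZMod p))⁻¹)^2)^2) = ∑ i ∈ Icc 1 m, (((i : ZMod p))⁻¹)^4
        from Finset.sum_congr rfl (fun i _ => by ring),
      hhalf 2 (by norm_num) (by omega) ⟨1, rfl⟩,
      hhalf 4 (by norm_num) (by omega) ⟨2, rfl⟩] at h
    simp only [neg_zero, ne_eq, OfNat.ofNat_ne_zero, not_false_eq_true, zero_pow, zero_sub,
      neg_zero] at h
    have h2 : (2 : ZMod p) * ZMod.castHom hdvd1 (ZMod p) e = 0 := by linear_combination h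
    exact (mul_eq_zero.mp h2).resolve_left h2ne
  have hker : (p : ZMod (p^5))^4 * ((∑ i ∈ Icc 1 m, (a i)^4) + 4*e) = 0 := by
    have hiff := zmod_mul_eq_zero_iff (N := p^5) (c := p^4) (d := p)
      (pow_ne_zero 4 (by omega)) (by ring) hdvd1 ((∑ i ∈ Icc 1 m, (a i)^4) + 4*e)
    rw [Nat.cast_pow] at hiff
    rw [hiff, map_add, map_sum]
    rw [Finset.sum_congr rfl (fun i hi => by
      simp only [Finset.mem_Icc] at hi
      rw [map_pow, hφa i hi.1 (by omega)] : ∀ i ∈ Icc 1 m,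
        ZMod.castHom hdvd1 (ZMod p) ((a i)^4) = (((i : ZMod p))⁻¹)^4),
      hhalf 4 (by norm_num) (by omega) ⟨2, rfl⟩, map_mul, map_ofNat, hφe]
    ring
  have hchoose4 : ((Nat.choose (2*p-1) (p-1) : ℕ) : ZMod (p^5))
      = 1 - (p : ZMod (p^5))^2 * (∑ i ∈ Icc 1 (p-1), (a i)^2) := by
    rw [hchoose3, hker, add_zero]
  rw [hchoose4, sub_eq_self]
  have hiff2 := zmod_mul_eq_zero_iff (N := p^5) (c := p^2) (d := p^3)
    (pow_ne_zero 2 (by omega)) (by ring) (pow_dvd_pow p (by norm_num))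
    (∑ i ∈ Icc 1 (p-1), (a i)^2)
  rw [Nat.cast_pow] at hiff2
  rw [hiff2, map_sum]
  rw [Finset.sum_congr rfl (fun i hi => by
    simp only [Finset.mem_Icc] at hi
    rw [map_pow, ha i, zmod_cast_inv _ _ (hunit i hi.1 hi.2), map_natCast]
    symm
    apply zmod_inv_eq
    have hu3 := zmod_isUnit_of_Icc hp 3 hi.1 hi.2
    have hm3 := ZMod.mul_inv_of_unit _ hu3
    linear_combination ((i : ZMod (p^3)) * ((i : ZMod (p^3)))⁻¹ + 1) * hm3 :
      ∀ i ∈ Icc 1 (p-1), ZMod.castHom (pow_dvd_pow p (by norm_num : 3 ≤ 5)) (ZMod (p^3)) ((a i)^2)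
        = ((i : ZMod (p^3))^2)⁻¹)]
end

section
/- For every prime p ≥ 7, (2p-1 choose p-1) ≡ 1 (mod p⁵) if and only if ∑_{i=1}^{p-1} 1/i ≡ 0 (mod p⁴), inverses taken modulo p⁴. -/
open Finset Nat

lemma zmod_inv_eq_s11 {n : ℕ} (a b : ZMod n) (ha : IsUnit a) (h : a * b = 1) : a⁻¹ = b := by
  have h1 := ZMod.inv_mul_of_unit a ha
  calc a⁻¹ = a⁻¹ * (a * b) := by rw [h, mul_one]
  _ = (a⁻¹ * a) * b := by ring
  _ = b := by rw [h1, one_mul]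

lemma prod_one_add_s11 {R : Type*} [CommRing R] (π : R) (hπ : π^5 = 0)
    {ι : Type*} [DecidableEq ι] (s : Finset ι) (c d : ι → R)
    (H : ∀ i ∈ s, π^4 * c i = -(2 * (π^4 * d i))) :
    ∏ i ∈ s, (1 + π^2 * c i) =
      1 + π^2 * ∑ i ∈ s, c i + 2 * π^4 * ((∑ i ∈ s, d i)^2 - ∑ i ∈ s, (d i)^2) := by
  induction s using Finset.induction_on with
  | empty => simp
  | insert a s' ha ih =>
    have hC : π^4 * ∑ i ∈ s', c i = -(2 * (π^4 * ∑ i ∈ s', d i)) := by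
      rw [Finset.mul_sum]
      rw [show -(2 * (π^4 * ∑ i ∈ s', d i)) = ∑ i ∈ s', -(2*(π^4 * d i)) by
        rw [Finset.mul_sum, Finset.mul_sum, ← Finset.sum_neg_distrib]]
      exact Finset.sum_congr rfl fun i hi => H i (Finset.mem_insert_of_mem hi)
    have Ha := H a (Finset.mem_insert_self a s')
    rw [Finset.prod_insert ha, Finset.sum_insert ha, Finset.sum_insert ha,
      Finset.sum_insert ha, ih (fun i hi => H i (Finset.mem_insert_of_mem hi))]
    linear_combination (∑ i ∈ s', c i) * Ha + (-2 * d a) * hC +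
      (2*π*(c a)*((∑ i ∈ s', d i)^2 - ∑ i ∈ s', (d i)^2)) * hπ

lemma cast_inv {n m : ℕ} [NeZero n] [NeZero m] (h : m ∣ n) (i : ℕ) (hi : i.Coprime n)
    (hmn : ∀ {j:ℕ}, j.Coprime n → j.Coprime m) :
    ZMod.castHom h (ZMod m) ((i : ZMod n)⁻¹) = ((i : ZMod m))⁻¹ := by
  have hu : IsUnit (i : ZMod n) := (ZMod.isUnit_iff_coprime i n).2 hi
  have h1 : (i : ZMod n) * (i : ZMod n)⁻¹ = 1 := ZMod.mul_inv_of_unit _ hu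
  have h2 : (i : ZMod m) * ZMod.castHom h (ZMod m) ((i : ZMod n)⁻¹) = 1 := by
    have := congrArg (ZMod.castHom h (ZMod m)) h1
    rwa [map_mul, map_natCast, map_one] at this
  exact (zmod_inv_eq_s11 _ _ ((ZMod.isUnit_iff_coprime i m).2 (hmn hi)) h2).symm

lemma p_mul_eq_zero_iff {p : ℕ} (hp : 1 < p) (a : ZMod (p^5)) :
    (p : ZMod (p^5)) * a = 0 ↔ ZMod.castHom (pow_dvd_pow p (by norm_num : 4 ≤ 5)) (ZMod (p^4)) a = 0 := by
  have : NeZero (p^5) := ⟨by positivity⟩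
  have : NeZero (p^4) := ⟨by positivity⟩
  obtain ⟨n, rfl⟩ := ZMod.intCast_surjective a
  rw [map_intCast]
  rw [show (p : ZMod (p^5)) * (n : ZMod (p^5)) = ((p * n : ℤ) : ZMod (p^5)) by push_cast; ring]
  rw [ZMod.intCast_zmod_eq_zero_iff_dvd, ZMod.intCast_zmod_eq_zero_iff_dvd]
  push_cast
  rw [show ((p:ℤ)^5) = p * p^4 by ring]
  exact mul_dvd_mul_iff_left (by positivity : (p:ℤ) ≠ 0)

lemma p4_mul_eq_zero {p : ℕ} (hp : 1 < p) (a : ZMod (p^5))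
    (h : ZMod.castHom (dvd_pow_self p (by norm_num)) (ZMod p) a = 0) :
    (p : ZMod (p^5))^4 * a = 0 := by
  have : NeZero (p^5) := ⟨by positivity⟩
  have : NeZero p := ⟨by omega⟩
  obtain ⟨n, rfl⟩ := ZMod.intCast_surjective a
  rw [map_intCast, ZMod.intCast_zmod_eq_zero_iff_dvd] at h
  obtain ⟨m, rfl⟩ := h
  rw [show (p : ZMod (p^5))^4 * ((p * m : ℤ) : ZMod (p^5)) = ((p^5 * m : ℤ) : ZMod (p^5)) by
    push_cast; ring]
  rw [show ((p:ℤ)^5 * m) = (p^5 : ℕ) * m by push_cast; ring, Int.cast_mul, Int.cast_natCast,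
    ZMod.natCast_self, zero_mul]

lemma pair_split_prod {M : Type*} [CommMonoid M] (p h : ℕ) (hph : p = 2*h+1) (f : ℕ → M) :
    ∏ i ∈ Icc 1 (p-1), f i = ∏ i ∈ Icc 1 h, (f i * f (p - i)) := by
  have e1 : Icc 1 (p-1) = Ioc 0 (2*h) := by rw [hph]; simp; rw [← Finset.Icc_add_one_left_eq_Ioc]; rfl
  have e2 : ∀ n : ℕ, Icc 1 n = Ioc 0 n := fun n => by rw [← Finset.Icc_add_one_left_eq_Ioc]; rfl
  rw [e1, e2, Finset.prod_mul_distrib,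
    ← Finset.prod_Ioc_consecutive f (Nat.zero_le h) (by omega : h ≤ 2*h)]
  congr 1
  apply Finset.prod_nbij' (fun j => p - j) (fun j => p - j)
  · intro a ha; simp only [Finset.mem_Ioc] at *; omega
  · intro a ha; simp only [Finset.mem_Ioc] at *; omega
  · intro a ha; simp only [Finset.mem_Ioc] at *; omega
  · intro a ha; simp only [Finset.mem_Ioc] at *; omega
  · intro a ha; simp only [Finset.mem_Ioc] at ha; congr 1; omega

lemma pair_split_sum {M : Type*} [AddCommMonoid M] (p h : ℕ) (hph : p = 2*h+1) (f : ℕ → M) :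
    ∑ i ∈ Icc 1 (p-1), f i = ∑ i ∈ Icc 1 h, (f i + f (p - i)) :=
  pair_split_prod (M := Multiplicative M) p h hph f

lemma full_sum_pow_zero (p : ℕ) [Fact p.Prime] (k : ℕ) (hk : 0 < k) (hk2 : k < p - 1) :
    ∑ i ∈ Icc 1 (p-1), ((i : ZMod p)⁻¹)^k = 0 := by
  have hp2 : 2 ≤ p := (Fact.out : p.Prime).two_le
  have step : ∀ i ∈ Icc 1 (p-1), ((i : ZMod p)⁻¹)^k = (i : ZMod p)^(p-1-k) := by
    intro i hi
    simp only [Finset.mem_Icc] at hi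
    have hne : (i : ZMod p) ≠ 0 := by
      rw [Ne, ZMod.natCast_eq_zero_iff]
      intro hdvd
      have := Nat.le_of_dvd (by omega) hdvd
      omega
    rw [inv_pow]
    refine inv_eq_of_mul_eq_one_right ?_
    rw [← pow_add, show k + (p - 1 - k) = p - 1 by omega]
    exact ZMod.pow_card_sub_one_eq_one hne
  rw [Finset.sum_congr rfl step]
  have h0 : ∑ i ∈ Icc 1 (p-1), (i : ZMod p)^(p-1-k) = ∑ x : ZMod p, x^(p-1-k) := by
    rw [show ∑ x : ZMod p, x^(p-1-k) = ∑ i ∈ range p, (i : ZMod p)^(p-1-k) from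
      (Finset.sum_nbij' (fun (x : ZMod p) => x.val) (fun i => (i : ZMod p))
        (fun x _ => Finset.mem_range.2 (ZMod.val_lt x))
        (fun i _ => Finset.mem_univ _)
        (fun x _ => by simp [ZMod.natCast_val, ZMod.cast_id])
        (fun i hi => by simp [ZMod.val_natCast_of_lt (Finset.mem_range.1 hi)])
        (fun x _ => by simp [ZMod.natCast_val, ZMod.cast_id]))]
    rw [show range p = insert 0 (Icc 1 (p-1)) by
      ext j; simp only [Finset.mem_range, Finset.mem_insert, Finset.mem_Icc]; omega]
    rw [Finset.sum_insert (by simp)]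
    rw [Nat.cast_zero, zero_pow (by omega : p - 1 - k ≠ 0), zero_add]
  rw [h0]
  have := FiniteField.sum_pow_lt_card_sub_one (K := ZMod p) (p-1-k) (by rw [ZMod.card]; omega)
  exact this

lemma half_sum_zero (p hh k : ℕ) [Fact p.Prime] (h7 : 7 ≤ p) (hph : p = 2*hh+1) (hk : k = 2 ∨ k = 4) :
    ∑ i ∈ Icc 1 hh, ((i : ZMod p)⁻¹)^k = 0 := by
  have hfull := full_sum_pow_zero p k (by rcases hk with rfl | rfl <;> norm_num)
    (by rcases hk with rfl | rfl <;> omega)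
  rw [pair_split_sum p hh hph] at hfull
  have heq : ∀ i ∈ Icc 1 hh, (((p - i : ℕ) : ZMod p)⁻¹)^k = ((i : ZMod p)⁻¹)^k := by
    intro i hi
    simp only [Finset.mem_Icc] at hi
    have : ((p - i : ℕ) : ZMod p) = -(i : ZMod p) := by
      rw [Nat.cast_sub (by omega : i ≤ p), ZMod.natCast_self, zero_sub]
    rw [this, inv_neg]
    rcases hk with rfl | rfl
    · ring
    · ring
  rw [Finset.sum_congr rfl (fun i hi => by rw [heq i hi])] at hfull
  have h2 : ∑ i ∈ Icc 1 hh, (((i : ZMod p)⁻¹)^k + ((i : ZMod p)⁻¹)^k)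
      = 2 * ∑ i ∈ Icc 1 hh, ((i : ZMod p)⁻¹)^k := by
    rw [Finset.mul_sum]; exact Finset.sum_congr rfl (fun i _ => by ring)
  rw [h2] at hfull
  have h2u : IsUnit (2 : ZMod p) := by
    rw [show (2 : ZMod p) = ((2:ℕ) : ZMod p) by norm_num, ZMod.isUnit_iff_coprime]
    rw [Nat.coprime_comm]
    exact ((Fact.out : p.Prime).coprime_iff_not_dvd).2
      (fun hd => by have := Nat.le_of_dvd (by norm_num) hd; omega)
  exact (h2u.mul_right_eq_zero).1 hfull

lemma prod_shift_factorial (p : ℕ) (hp : 1 ≤ p) :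
    (∏ i ∈ Icc 1 (p-1), (p + i)) * p ! = (2*p - 1)! := by
  have h1 : ∏ i ∈ Icc 1 (2*p-1), i = (2*p-1)! := by
    rw [show Icc 1 (2*p-1) = Ico 1 ((2*p-1)+1) by rw [Finset.Ico_add_one_right_eq_Icc],
      Finset.prod_Ico_id_eq_factorial]
  have h2 : ∏ i ∈ Icc 1 p, i = p ! := by
    rw [show Icc 1 p = Ico 1 (p+1) by rw [Finset.Ico_add_one_right_eq_Icc], Finset.prod_Ico_id_eq_factorial]
  have h3 : ∏ i ∈ Ioc p (2*p-1), i = ∏ i ∈ Icc 1 (p-1), (p + i) := by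
    apply Finset.prod_nbij' (fun j => j - p) (fun i => p + i)
    · intro a ha; simp only [Finset.mem_Ioc, Finset.mem_Icc] at *; omega
    · intro a ha; simp only [Finset.mem_Ioc, Finset.mem_Icc] at *; omega
    · intro a ha; simp only [Finset.mem_Ioc] at ha; omega
    · intro a ha; simp only [Finset.mem_Icc] at ha; omega
    · intro a ha; simp only [Finset.mem_Ioc] at ha; omega
  rw [← h1, show Icc 1 (2*p-1) = Ioc 0 (2*p-1) by rw [← Finset.Icc_add_one_left_eq_Ioc]; rfl,
    ← Finset.prod_Ioc_consecutive (fun i => i) (Nat.zero_le p) (by omega : p ≤ 2*p-1)]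
  rw [show Ioc 0 p = Icc 1 p by rw [← Finset.Icc_add_one_left_eq_Ioc]; rfl]
  rw [h2, h3, mul_comm]

theorem binom_iff_harmonic (p : ℕ) (hp : p.Prime) (h7 : 7 ≤ p) :
    ((Nat.choose (2 * p - 1) (p - 1) : ZMod (p ^ 5)) = 1) ↔
      (∑ i ∈ Finset.Icc 1 (p - 1), ((i : ZMod (p ^ 4)))⁻¹ = 0) := by
  haveI : Fact p.Prime := ⟨hp⟩
  obtain ⟨h, hph⟩ : ∃ h, p = 2*h+1 := ⟨(p-1)/2, by
    have : p % 2 = 1 := Nat.odd_iff.mp (hp.odd_of_ne_two (by omega)); omega⟩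
  haveI : NeZero (p^5) := ⟨pow_ne_zero _ (by omega)⟩
  haveI : NeZero (p^4) := ⟨pow_ne_zero _ (by omega)⟩
  haveI : NeZero p := ⟨by omega⟩
  have hp5 : (p : ZMod (p^5))^5 = 0 := by
    rw [← Nat.cast_pow, ZMod.natCast_self]
  have hcop : ∀ i, 1 ≤ i → i ≤ p - 1 → Nat.Coprime i (p^5) := by
    intro i h1 h2
    refine Nat.Coprime.pow_right _ ?_
    rw [Nat.coprime_comm]
    exact (hp.coprime_iff_not_dvd).2 (fun hd => by have := Nat.le_of_dvd (by omega) hd; omega)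
  have hunit : ∀ i, 1 ≤ i → i ≤ p - 1 → IsUnit ((i : ZMod (p^5))) :=
    fun i h1 h2 => (ZMod.isUnit_iff_coprime i (p^5)).2 (hcop i h1 h2)
  have hx : ∀ i, 1 ≤ i → i ≤ p - 1 → (i : ZMod (p^5)) * ((i : ZMod (p^5)))⁻¹ = 1 :=
    fun i h1 h2 => ZMod.mul_inv_of_unit _ (hunit i h1 h2)
  -- the inverse of p - i
  have hxp : ∀ i, 1 ≤ i → i ≤ h → ((p - i : ℕ) : ZMod (p^5))⁻¹
      = -(((i:ZMod (p^5)))⁻¹ * (1 + p*((i:ZMod (p^5)))⁻¹ + p^2*(((i:ZMod (p^5)))⁻¹)^2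
          + p^3*(((i:ZMod (p^5)))⁻¹)^3 + p^4*(((i:ZMod (p^5)))⁻¹)^4)) := by
    intro i h1 h2
    apply zmod_inv_eq_s11
    · exact hunit (p - i) (by omega) (by omega)
    · have hc : ((p - i : ℕ) : ZMod (p^5)) = (p : ZMod (p^5)) - i := by
        rw [Nat.cast_sub (by omega)]
      rw [hc]
      have hxi := hx i h1 (by omega)
      set u := ((i : ZMod (p^5)))⁻¹ with hu
      linear_combination (1 + (p:ZMod (p^5))*u + (p:ZMod (p^5))^2*u^2 + (p:ZMod (p^5))^3*u^3
        + (p:ZMod (p^5))^4*u^4) * hxi + (-(u^5)) * hp5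
  set c : ℕ → ZMod (p^5) := fun i => -(2*(((i:ZMod (p^5)))⁻¹)^2
      + 2*(p:ZMod (p^5))*(((i:ZMod (p^5)))⁻¹)^3
      + 2*(p:ZMod (p^5))^2*(((i:ZMod (p^5)))⁻¹)^4) with hcdef
  set d : ℕ → ZMod (p^5) := fun i => (((i:ZMod (p^5)))⁻¹)^2 with hddef
  have key1 : ∀ i ∈ Icc 1 h, (1 + (p:ZMod (p^5)) * ((i:ZMod (p^5)))⁻¹)
      * (1 + (p:ZMod (p^5)) * (((p - i : ℕ):ZMod (p^5)))⁻¹) = 1 + (p:ZMod (p^5))^2 * c i := by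
    intro i hi
    simp only [Finset.mem_Icc] at hi
    rw [hxp i hi.1 hi.2, hcdef]
    set u := ((i : ZMod (p^5)))⁻¹ with hu
    linear_combination (-(2*u^5) - (p:ZMod (p^5))*u^6) * hp5
  have key2 : ∀ i ∈ Icc 1 h, (p:ZMod (p^5))^4 * c i = -(2 * ((p:ZMod (p^5))^4 * d i)) := by
    intro i hi
    rw [hcdef, hddef]
    set u := ((i : ZMod (p^5)))⁻¹ with hu
    linear_combination (-(2*u^3) - 2*(p:ZMod (p^5))*u^4) * hp5
  have hexp := prod_one_add_s11 (p : ZMod (p^5)) hp5 (Icc 1 h) c d key2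
  have hprod1 : ∏ i ∈ Icc 1 (p-1), (1 + (p:ZMod (p^5)) * ((i:ZMod (p^5)))⁻¹)
      = ∏ i ∈ Icc 1 h, (1 + (p:ZMod (p^5))^2 * c i) := by
    rw [pair_split_prod p h hph (fun i => (1 + (p:ZMod (p^5)) * ((i : ZMod (p^5)))⁻¹))]
    exact Finset.prod_congr rfl key1
  have hCS : (p:ZMod (p^5))^2 * (∑ i ∈ Icc 1 h, c i)
      = 2 * (p:ZMod (p^5)) * ∑ i ∈ Icc 1 (p-1), ((i : ZMod (p^5)))⁻¹ := by
    rw [pair_split_sum p h hph (fun i => ((i : ZMod (p^5)))⁻¹), Finset.mul_sum, Finset.mul_sum]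
    refine Finset.sum_congr rfl ?_
    intro i hi
    simp only [Finset.mem_Icc] at hi
    rw [hxp i hi.1 hi.2, hcdef]
    set u := ((i : ZMod (p^5)))⁻¹ with hu
    linear_combination (2*u^5) * hp5
  -- the p^4 term vanishes
  have hdvd1 : p ∣ p^5 := dvd_pow_self p (by norm_num)
  set fφ := ZMod.castHom hdvd1 (ZMod p) with hfφ
  have hfφinv : ∀ i, 1 ≤ i → i ≤ p - 1 → fφ (((i:ZMod (p^5)))⁻¹) = ((i : ZMod p))⁻¹ := by
    intro i h1 h2
    exact cast_inv hdvd1 i (hcop i h1 h2)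
      (fun {j} hj => Nat.Coprime.coprime_dvd_right hdvd1 hj)
  have hfφD : fφ ((∑ i ∈ Icc 1 h, d i)^2 - ∑ i ∈ Icc 1 h, (d i)^2) = 0 := by
    rw [map_sub, map_pow, map_sum, map_sum]
    have e2 : ∑ i ∈ Icc 1 h, fφ (d i) = ∑ i ∈ Icc 1 h, ((i : ZMod p)⁻¹)^2 := by
      refine Finset.sum_congr rfl ?_
      intro i hi; simp only [Finset.mem_Icc] at hi
      rw [hddef, map_pow, hfφinv i hi.1 (by omega)]
    have e4 : ∑ i ∈ Icc 1 h, fφ ((d i)^2) = ∑ i ∈ Icc 1 h, ((i : ZMod p)⁻¹)^4 := by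
      refine Finset.sum_congr rfl ?_
      intro i hi; simp only [Finset.mem_Icc] at hi
      rw [hddef, map_pow, map_pow, hfφinv i hi.1 (by omega), ← pow_mul]
    rw [e2, e4, half_sum_zero p h 2 h7 hph (Or.inl rfl),
      half_sum_zero p h 4 h7 hph (Or.inr rfl)]
    simp
  have hD0 : (p:ZMod (p^5))^4 * ((∑ i ∈ Icc 1 h, d i)^2 - ∑ i ∈ Icc 1 h, (d i)^2) = 0 :=
    p4_mul_eq_zero hp.one_lt _ hfφD
  have hprodfinal : ∏ i ∈ Icc 1 (p-1), (1 + (p:ZMod (p^5)) * ((i:ZMod (p^5)))⁻¹)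
      = 1 + 2 * (p:ZMod (p^5)) * ∑ i ∈ Icc 1 (p-1), ((i : ZMod (p^5)))⁻¹ := by
    rw [hprod1, hexp, ← hCS]
    rw [show 2 * (p:ZMod (p^5))^4 * ((∑ i ∈ Icc 1 h, d i)^2 - ∑ i ∈ Icc 1 h, (d i)^2)
      = 2 * ((p:ZMod (p^5))^4 * ((∑ i ∈ Icc 1 h, d i)^2 - ∑ i ∈ Icc 1 h, (d i)^2)) by ring,
      hD0, mul_zero, add_zero]
  -- relating to the binomial coefficient
  have hnat : ∏ i ∈ Icc 1 (p-1), (p + i) = (p-1)! * (2*p-1).choose (p-1) := by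
    have hc := Nat.choose_mul_factorial_mul_factorial (by omega : p - 1 ≤ 2*p - 1)
    rw [show 2*p - 1 - (p-1) = p by omega] at hc
    have := prod_shift_factorial p (by omega)
    apply Nat.eq_of_mul_eq_mul_right (Nat.factorial_pos p)
    rw [this, ← hc]; ring
  have hfacprod : ((p-1)! : ZMod (p^5)) = ∏ i ∈ Icc 1 (p-1), ((i : ZMod (p^5))) := by
    rw [← Nat.cast_prod]
    congr 1
    rw [show Icc 1 (p-1) = Ico 1 ((p-1)+1) by rw [Finset.Ico_add_one_right_eq_Icc],
      Finset.prod_Ico_id_eq_factorial]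
  have hfac : (∏ i ∈ Icc 1 (p-1), ((p:ZMod (p^5)) + i))
      = ((p-1)! : ZMod (p^5)) * ∏ i ∈ Icc 1 (p-1), (1 + (p:ZMod (p^5)) * ((i:ZMod (p^5)))⁻¹) := by
    rw [hfacprod, ← Finset.prod_mul_distrib]
    refine Finset.prod_congr rfl ?_
    intro i hi
    simp only [Finset.mem_Icc] at hi
    have := hx i hi.1 hi.2
    linear_combination (-(p:ZMod (p^5))) * this
  have hcast : (∏ i ∈ Icc 1 (p-1), ((p:ZMod (p^5)) + i))
      = ((p-1)! : ZMod (p^5)) * ((2*p-1).choose (p-1) : ZMod (p^5)) := by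
    have := congrArg (Nat.cast : ℕ → ZMod (p^5)) hnat
    push_cast at this
    rw [← this]
  have hfacu : IsUnit (((p-1)! : ZMod (p^5))) := by
    rw [ZMod.isUnit_iff_coprime]
    refine Nat.Coprime.pow_right _ ?_
    rw [Nat.coprime_comm]
    exact (hp.coprime_iff_not_dvd).2 (fun hd => by
      have := (Nat.Prime.dvd_factorial hp).1 hd; omega)
  have hchoose : ((2*p-1).choose (p-1) : ZMod (p^5))
      = 1 + 2 * (p:ZMod (p^5)) * ∑ i ∈ Icc 1 (p-1), ((i : ZMod (p^5)))⁻¹ := by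
    apply hfacu.mul_left_cancel
    rw [← hcast, hfac, hprodfinal]
  have hdvd45 : (p^4 : ℕ) ∣ p^5 := pow_dvd_pow p (by norm_num : 4 ≤ 5)
  set fψ := ZMod.castHom hdvd45 (ZMod (p^4)) with hfψ
  have hfψinv : ∀ i, 1 ≤ i → i ≤ p - 1 → fψ (((i:ZMod (p^5)))⁻¹) = ((i : ZMod (p^4)))⁻¹ := by
    intro i h1 h2
    exact cast_inv hdvd45 i (hcop i h1 h2)
      (fun {j} hj => Nat.Coprime.coprime_dvd_right hdvd45 hj)
  have hfψS : fψ (2 * ∑ i ∈ Icc 1 (p-1), ((i : ZMod (p^5)))⁻¹)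
      = 2 * ∑ i ∈ Icc 1 (p-1), ((i : ZMod (p^4)))⁻¹ := by
    rw [map_mul, map_ofNat, map_sum]
    congr 1
    refine Finset.sum_congr rfl ?_
    intro i hi
    simp only [Finset.mem_Icc] at hi
    exact hfψinv i hi.1 hi.2
  have h2u4 : IsUnit (2 : ZMod (p^4)) := by
    rw [show (2 : ZMod (p^4)) = ((2:ℕ) : ZMod (p^4)) by norm_num, ZMod.isUnit_iff_coprime]
    refine Nat.Coprime.pow_right _ ?_
    rw [Nat.coprime_comm]
    exact (hp.coprime_iff_not_dvd).2
      (fun hd => by have := Nat.le_of_dvd (by norm_num) hd; omega)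
  rw [hchoose]
  constructor
  · intro hl
    have h0 : 2 * (p:ZMod (p^5)) * ∑ i ∈ Icc 1 (p-1), ((i : ZMod (p^5)))⁻¹ = 0 := by
      linear_combination hl
    have h1 : (p:ZMod (p^5)) * (2 * ∑ i ∈ Icc 1 (p-1), ((i : ZMod (p^5)))⁻¹) = 0 := by
      linear_combination h0
    have h2 := (p_mul_eq_zero_iff hp.one_lt _).1 h1
    rw [← hfψ] at h2
    rw [hfψS] at h2
    exact (h2u4.mul_right_eq_zero).1 h2
  · intro hr
    have h2 : fψ (2 * ∑ i ∈ Icc 1 (p-1), ((i : ZMod (p^5)))⁻¹) = 0 := by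
      rw [hfψS, hr, mul_zero]
    have h1 : (p:ZMod (p^5)) * (2 * ∑ i ∈ Icc 1 (p-1), ((i : ZMod (p^5)))⁻¹) = 0 := by
      rw [p_mul_eq_zero_iff hp.one_lt]
      exact h2
    linear_combination h1
end

section
/- For every prime p ≥ 7, (2p-1 choose p-1) ≡ 1 - p³·B_{p³-p²-2} (mod p⁵), the congruence interpreted between p-integral rational numbers, where B_k is the k-th Bernoulli number. -/
open Finset
namespace BB
variable {p : ℕ} [hp : Fact p.Prime]

lemma psum_le {α : Type*} (s : Finset α) (f : α → ℚ_[p]) {C : ℝ} (hC : 0 ≤ C)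
    (h : ∀ i ∈ s, ‖f i‖ ≤ C) : ‖∑ i ∈ s, f i‖ ≤ C :=
  IsUltrametricDist.norm_sum_le_of_forall_le_of_nonneg hC h

lemma pw_pos (a : ℤ) : (0:ℝ) < (p:ℝ)^a :=
  zpow_pos (by exact_mod_cast hp.out.pos) a

lemma pw_mono {a b : ℤ} (h : a ≤ b) : (p:ℝ)^a ≤ (p:ℝ)^b :=
  zpow_le_zpow_right₀ (by exact_mod_cast hp.out.one_lt.le) h

lemma pw_mul (a b : ℤ) : (p:ℝ)^a * (p:ℝ)^b = (p:ℝ)^(a+b) :=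
  (zpow_add₀ (by exact_mod_cast hp.out.pos.ne') a b).symm

lemma norm_nat_le (n : ℕ) : ‖(n:ℚ_[p])‖ ≤ 1 := by
  have := Padic.norm_int_le_one (p := p) (n : ℤ); push_cast at this ⊢; exact this

lemma norm_nat_of_not_dvd {n : ℕ} (h : ¬ p ∣ n) : ‖(n:ℚ_[p])‖ = 1 := by
  refine le_antisymm (norm_nat_le n) ?_
  by_contra hlt
  push_neg at hlt
  have : ‖((n:ℤ) : ℚ_[p])‖ < 1 := by push_cast; exact hlt
  rw [Padic.norm_intCast_lt_one_iff] at this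
  exact h (by exact_mod_cast this)

lemma norm_p_pow (m : ℕ) : ‖(p:ℚ_[p])^m‖ = (p:ℝ)^(-(m:ℤ)) := by
  rw [norm_pow, Padic.norm_p, inv_pow, ← zpow_natCast, ← zpow_neg]

/-- bijection between `Ico 1 p` and units of `ZMod p` -/
lemma sum_Ico_units {M : Type*} [AddCommMonoid M] (f : ZMod p → M) :
    ∑ i ∈ Ico 1 p, f (i : ZMod p) = ∑ u : (ZMod p)ˣ, f u := by
  haveI : NeZero p := ⟨hp.out.ne_zero⟩
  refine Finset.sum_nbij' (fun i => if h : ((i : ZMod p)) ≠ 0 then Units.mk0 _ h else 1)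
    (fun u => (u : ZMod p).val) ?_ ?_ ?_ ?_ ?_
  · intro i hi
    exact mem_univ _
  · intro u _
    simp only [mem_Ico]
    constructor
    · rcases Nat.eq_zero_or_pos (u : ZMod p).val with h | h
      · exfalso
        have : ((u : ZMod p)) = 0 := by
          have := ZMod.natCast_val (R := ZMod p) (u : ZMod p)
          rw [ZMod.cast_id] at this
          rw [← this, h, Nat.cast_zero]
        exact u.ne_zero this
      · exact h
    · exact ZMod.val_lt _
  · intro i hi
    simp only [mem_Ico] at hi
    have h0 : ((i : ZMod p)) ≠ 0 := by
      rw [Ne, ZMod.natCast_eq_zero_iff]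
      intro hdvd
      have := Nat.le_of_dvd (by omega) hdvd
      omega
    simp only [dif_pos h0]
    simp [ZMod.val_cast_of_lt hi.2]
  · intro u _
    have h0 : (((u : ZMod p).val : ZMod p)) ≠ 0 := by
      have := ZMod.natCast_val (R := ZMod p) (u : ZMod p)
      rw [ZMod.cast_id] at this
      rw [this]
      exact u.ne_zero
    simp only [dif_pos h0]
    ext
    have := ZMod.natCast_val (R := ZMod p) (u : ZMod p)
    rw [ZMod.cast_id] at this
    simp [this]
  · intro i hi
    congr 1
    simp only [mem_Ico] at hi
    have h0 : ((i : ZMod p)) ≠ 0 := by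
      rw [Ne, ZMod.natCast_eq_zero_iff]
      intro hdvd
      have := Nat.le_of_dvd (by omega) hdvd
      omega
    simp only [dif_pos h0]
    simp

lemma sum_units_pow_eq_zero {k : ℕ} (hk : ¬ (p - 1) ∣ k) :
    ∑ u : (ZMod p)ˣ, ((u : ZMod p))^k = 0 := by
  classical
  have := FiniteField.sum_pow_units (ZMod p) k
  rw [ZMod.card] at this
  rw [this, if_neg hk]

lemma fact_div_cast {i : ℕ} (hi : i ∈ Ico 1 p) :
    ((((p-1).factorial / i : ℕ)) : ZMod p) = ((p-1).factorial : ZMod p) * ((i : ZMod p))⁻¹ := by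
  simp only [mem_Ico] at hi
  have hdvd : i ∣ (p-1).factorial := Nat.dvd_factorial (by omega) (by omega)
  have h0 : ((i : ZMod p)) ≠ 0 := by
    rw [Ne, ZMod.natCast_eq_zero_iff]
    intro h; have := Nat.le_of_dvd (by omega) h; omega
  have hmul : ((p-1).factorial/i : ℕ) * i = (p-1).factorial := Nat.div_mul_cancel hdvd
  have := congrArg (fun n : ℕ => (n : ZMod p)) hmul
  push_cast at this
  field_simp
  exact this

lemma dvd_sum_fact_div_pow {k : ℕ} (hk : ¬ (p - 1) ∣ k) :
    p ∣ ∑ i ∈ Ico 1 p, ((p-1).factorial / i)^k := by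
  classical
  rw [← ZMod.natCast_eq_zero_iff]
  push_cast
  rw [Finset.sum_congr rfl (fun i hi => by rw [fact_div_cast hi])]
  have : ∑ i ∈ Ico 1 p, (((p-1).factorial : ZMod p) * ((i:ZMod p))⁻¹)^k
      = ∑ u : (ZMod p)ˣ, (((p-1).factorial : ZMod p) * ((u:ZMod p))⁻¹)^k :=
    sum_Ico_units (fun z => (((p-1).factorial : ZMod p) * z⁻¹)^k)
  rw [this]
  have h2 : ∑ u : (ZMod p)ˣ, (((p-1).factorial : ZMod p) * ((u:ZMod p))⁻¹)^k
      = ((p-1).factorial : ZMod p)^k * ∑ u : (ZMod p)ˣ, ((u:ZMod p))^k := by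
    rw [Finset.mul_sum]
    refine Fintype.sum_equiv (Equiv.inv _) _ _ (fun u => ?_)
    rw [mul_pow, Equiv.inv_apply]
    congr 2
    exact (Units.val_inv_eq_inv_val u).symm
  rw [h2, sum_units_pow_eq_zero hk, mul_zero]

lemma dvd_sum_range_pow {k : ℕ} (hk : ¬ (p - 1) ∣ k) :
    (p:ℤ) ∣ ∑ i ∈ range p, (i:ℤ)^k := by
  classical
  have hk0 : k ≠ 0 := by rintro rfl; exact hk (dvd_zero _)
  rw [← ZMod.intCast_zmod_eq_zero_iff_dvd]
  push_cast
  rw [range_eq_Ico, Finset.sum_eq_sum_Ico_succ_bot hp.out.pos]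
  rw [Nat.cast_zero, zero_pow hk0, zero_add, zero_add]
  rw [sum_Ico_units (fun z : ZMod p => z^k)]
  exact sum_units_pow_eq_zero hk

section C4
variable {p : ℕ} [hp : Fact p.Prime]

variable (p) in
noncomputable def xx (i : ℕ) : ℚ_[p] := (i : ℚ_[p])⁻¹

variable (p) in
noncomputable def yy (i : ℕ) : ℚ_[p] := xx p (p - i)

variable (p) in
noncomputable def AA (a b : ℕ) : ℚ_[p] := ∑ i ∈ Ico 1 p, xx p i ^ a * yy p i ^ b

variable (p) in
noncomputable def EE : ℚ_[p] := ∑ i ∈ Ico 1 p, ((2*i:ℚ_[p]) - p) * (xx p i^4 * yy p i^2)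

lemma norm_cast_mem {i : ℕ} (h1 : 1 ≤ i) (h2 : i < p) : ‖(i:ℚ_[p])‖ = 1 :=
  norm_nat_of_not_dvd (fun h => by have := Nat.le_of_dvd (by omega) h; omega)

lemma cast_mem_ne {i : ℕ} (h1 : 1 ≤ i) (h2 : i < p) : ((i:ℚ_[p])) ≠ 0 := by
  intro h
  have := norm_cast_mem (p := p) h1 h2
  rw [h, norm_zero] at this
  norm_num at this

lemma norm_xx {i : ℕ} (h1 : 1 ≤ i) (h2 : i < p) : ‖xx p i‖ = 1 := by
  rw [xx, norm_inv, norm_cast_mem h1 h2, inv_one]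

lemma norm_yy {i : ℕ} (h1 : 1 ≤ i) (h2 : i < p) : ‖yy p i‖ = 1 :=
  norm_xx (by omega) (by omega)

lemma yy_eq {i : ℕ} (h2 : i ≤ p) : yy p i = ((p:ℚ_[p]) - i)⁻¹ := by
  rw [yy, xx, Nat.cast_sub h2]

lemma norm_AA_le_one (a b : ℕ) : ‖AA p a b‖ ≤ 1 := by
  refine psum_le _ _ zero_le_one (fun i hi => ?_)
  simp only [mem_Ico] at hi
  rw [norm_mul, norm_pow, norm_pow, norm_xx hi.1 hi.2, norm_yy hi.1 hi.2]
  norm_num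

lemma norm_EE_le_one : ‖EE p‖ ≤ 1 := by
  refine psum_le _ _ zero_le_one (fun i hi => ?_)
  simp only [mem_Ico] at hi
  rw [norm_mul, norm_mul, norm_pow, norm_pow, norm_xx hi.1 hi.2, norm_yy hi.1 hi.2]
  have : ((2*i:ℚ_[p]) - p) = (((2*i - p : ℤ)) : ℚ_[p]) := by push_cast; ring
  rw [this]
  have := Padic.norm_int_le_one (p := p) (2*i - p : ℤ)
  simpa using this

lemma nmax {x y : ℚ_[p]} {C : ℝ} (hx : ‖x‖ ≤ C) (hy : ‖y‖ ≤ C) : ‖x + y‖ ≤ C :=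
  le_trans (Padic.nonarchimedean x y) (max_le hx hy)

lemma nmax' {x y : ℚ_[p]} {C : ℝ} (hx : ‖x‖ ≤ C) (hy : ‖y‖ ≤ C) : ‖x - y‖ ≤ C := by
  rw [sub_eq_add_neg]
  exact nmax hx (by rwa [norm_neg])

lemma nmul {x y : ℚ_[p]} {a b : ℤ} (hx : ‖x‖ ≤ (p:ℝ)^a) (hy : ‖y‖ ≤ (p:ℝ)^b) :
    ‖x*y‖ ≤ (p:ℝ)^(a+b) := by
  rw [norm_mul, ← pw_mul]
  exact mul_le_mul hx hy (norm_nonneg _) (pw_pos _).le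

lemma norm_p_le : ‖(p:ℚ_[p])‖ ≤ (p:ℝ)^(-1:ℤ) := by
  rw [Padic.norm_p, zpow_neg, zpow_one]

lemma sum_reflect (f : ℕ → ℚ_[p]) : ∑ i ∈ Ico 1 p, f (p - i) = ∑ i ∈ Ico 1 p, f i := by
  refine Finset.sum_nbij' (fun i => p - i) (fun i => p - i) ?_ ?_ ?_ ?_ ?_ <;>
    intros i hi <;> simp only [mem_Ico] at * <;> omega

end C4

section C5
variable {p : ℕ} [hp : Fact p.Prime]

lemma cast_sub_ne {i : ℕ} (h1 : 1 ≤ i) (h2 : i < p) : ((p:ℚ_[p]) - i) ≠ 0 := by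
  have h := norm_cast_mem (p := p) (i := p - i) (by omega) (by omega)
  rw [Nat.cast_sub (by omega : i ≤ p)] at h
  intro hz; rw [hz, norm_zero] at h; norm_num at h

lemma AA_I1 : AA p 1 1 + AA p 2 0 = p * AA p 2 1 := by
  rw [AA, AA, AA, ← sum_add_distrib, mul_sum]
  refine sum_congr rfl fun i hi => ?_
  simp only [mem_Ico] at hi
  have hu := cast_mem_ne (p := p) hi.1 hi.2
  have hv := cast_sub_ne (p := p) hi.1 hi.2
  rw [xx, yy_eq (by omega : i ≤ p)]
  field_simp
  ring

lemma AA_I2 : AA p 2 1 + AA p 3 0 = p * AA p 3 1 := by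
  rw [AA, AA, AA, ← sum_add_distrib, mul_sum]
  refine sum_congr rfl fun i hi => ?_
  simp only [mem_Ico] at hi
  have hu := cast_mem_ne (p := p) hi.1 hi.2
  have hv := cast_sub_ne (p := p) hi.1 hi.2
  rw [xx, yy_eq (by omega : i ≤ p)]
  field_simp
  ring

lemma AA_I3 : AA p 3 1 + AA p 4 0 = p * AA p 4 1 := by
  rw [AA, AA, AA, ← sum_add_distrib, mul_sum]
  refine sum_congr rfl fun i hi => ?_
  simp only [mem_Ico] at hi
  have hu := cast_mem_ne (p := p) hi.1 hi.2
  have hv := cast_sub_ne (p := p) hi.1 hi.2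
  rw [xx, yy_eq (by omega : i ≤ p)]
  field_simp
  ring

lemma AA_I5 : AA p 1 3 + AA p 2 2 = p * AA p 2 3 := by
  rw [AA, AA, AA, ← sum_add_distrib, mul_sum]
  refine sum_congr rfl fun i hi => ?_
  simp only [mem_Ico] at hi
  have hu := cast_mem_ne (p := p) hi.1 hi.2
  have hv := cast_sub_ne (p := p) hi.1 hi.2
  rw [xx, yy_eq (by omega : i ≤ p)]
  field_simp
  ring

lemma AA_I6 : AA p 2 2 = AA p 4 0 + p * EE p := by
  rw [AA, AA, EE, mul_sum, ← sum_add_distrib]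
  refine sum_congr rfl fun i hi => ?_
  simp only [mem_Ico] at hi
  have hu := cast_mem_ne (p := p) hi.1 hi.2
  have hv := cast_sub_ne (p := p) hi.1 hi.2
  rw [xx, yy_eq (by omega : i ≤ p)]
  field_simp
  ring

lemma AA30_reflect : ∑ i ∈ Ico 1 p, yy p i ^ 3 = AA p 3 0 := by
  have h1 : ∑ i ∈ Ico 1 p, yy p i ^ 3 = ∑ i ∈ Ico 1 p, xx p i ^ 3 :=
    sum_reflect (fun j => xx p j ^ 3)
  rw [h1, AA]
  simp

lemma alg4 {F : Type*} [Field F] {P u v : F} (hu : u ≠ 0) (hv : v ≠ 0) (hP : P = v + u) :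
    u⁻¹^3 + v⁻¹^3 = 3*P*(u⁻¹^1 * v⁻¹^3) - 3*P^2*(u⁻¹^2*v⁻¹^3) + P^3*(u⁻¹^3*v⁻¹^3) := by
  subst hP
  rw [sub_add_eq_add_sub, eq_sub_iff_add_eq]
  field_simp
  ring

lemma AA_I4 : 2 * AA p 3 0 =
    3*(p:ℚ_[p])*AA p 1 3 - 3*(p:ℚ_[p])^2*AA p 2 3 + (p:ℚ_[p])^3*AA p 3 3 := by
  have h1 : 2 * AA p 3 0 = ∑ i ∈ Ico 1 p, (xx p i^3 + yy p i^3) := by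
    rw [sum_add_distrib, AA30_reflect, AA]
    simp only [pow_zero, mul_one]
    ring
  rw [h1, AA, AA, AA, mul_sum, mul_sum, mul_sum, ← sum_sub_distrib, ← sum_add_distrib]
  refine sum_congr rfl fun i hi => ?_
  simp only [mem_Ico] at hi
  have hu := cast_mem_ne (p := p) hi.1 hi.2
  have hv := cast_sub_ne (p := p) hi.1 hi.2
  rw [xx, yy_eq (by omega : i ≤ p)]
  exact alg4 hu hv (by ring)

lemma norm_fact_eq_one : ‖((p-1).factorial : ℚ_[p])‖ = 1 := by
  refine norm_nat_of_not_dvd (fun h => ?_)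
  rw [hp.out.dvd_factorial] at h
  have := hp.out.two_le
  omega

lemma norm_AAk0 {k : ℕ} (hk : ¬ (p-1) ∣ k) : ‖AA p k 0‖ ≤ (p:ℝ)^(-1:ℤ) := by
  have key : AA p k 0 * ((p-1).factorial : ℚ_[p])^k
      = ((∑ i ∈ Ico 1 p, ((p-1).factorial / i)^k : ℕ) : ℚ_[p]) := by
    rw [AA, sum_mul, Nat.cast_sum]
    refine sum_congr rfl fun i hi => ?_
    simp only [mem_Ico] at hi
    have hu := cast_mem_ne (p := p) hi.1 hi.2
    have hdvd : i ∣ (p-1).factorial := Nat.dvd_factorial (by omega) (by omega)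
    rw [Nat.cast_pow, Nat.cast_div hdvd hu, xx, pow_zero, mul_one, div_eq_mul_inv, mul_pow]
    ring
  have hnorm : ‖AA p k 0‖ = ‖((∑ i ∈ Ico 1 p, ((p-1).factorial / i)^k : ℕ) : ℚ_[p])‖ := by
    rw [← key, norm_mul, norm_pow, norm_fact_eq_one, one_pow, mul_one]
  rw [hnorm]
  have hdvd : ((p:ℤ)^1) ∣ ((∑ i ∈ Ico 1 p, ((p-1).factorial / i)^k : ℕ) : ℤ) := by
    rw [pow_one]
    exact_mod_cast Int.natCast_dvd_natCast.mpr (dvd_sum_fact_div_pow hk)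
  have := (Padic.norm_int_le_pow_iff_dvd
    ((∑ i ∈ Ico 1 p, ((p-1).factorial / i)^k : ℕ) : ℤ) 1).mpr hdvd
  push_cast at this
  exact_mod_cast this

end C5

section C6
variable {p : ℕ} [hp : Fact p.Prime]

lemma nmul1 {x y : ℚ_[p]} {a : ℤ} (hx : ‖x‖ ≤ (p:ℝ)^a) (hy : ‖y‖ ≤ 1) :
    ‖x*y‖ ≤ (p:ℝ)^a := by
  rw [norm_mul]
  calc ‖x‖ * ‖y‖ ≤ (p:ℝ)^a * 1 :=
        mul_le_mul hx hy (norm_nonneg _) (pw_pos _).le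
    _ = (p:ℝ)^a := mul_one _

lemma ndvd2 (h7 : 7 ≤ p) : ¬ (p-1) ∣ 2 := fun h => by
  have := Nat.le_of_dvd (by norm_num) h; omega

lemma ndvd4 (h7 : 7 ≤ p) : ¬ (p-1) ∣ 4 := fun h => by
  have := Nat.le_of_dvd (by norm_num) h; omega

lemma nAA20 (h7 : 7 ≤ p) : ‖AA p 2 0‖ ≤ (p:ℝ)^(-1:ℤ) := norm_AAk0 (ndvd2 h7)
lemma nAA40 (h7 : 7 ≤ p) : ‖AA p 4 0‖ ≤ (p:ℝ)^(-1:ℤ) := norm_AAk0 (ndvd4 h7)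

lemma norm_two_eq (h7 : 7 ≤ p) : ‖(2:ℚ_[p])‖ = 1 := by
  have : ((2:ℕ) : ℚ_[p]) = (2:ℚ_[p]) := by norm_num
  rw [← this]
  exact norm_nat_of_not_dvd (fun h => by have := Nat.le_of_dvd (by norm_num) h; omega)

lemma norm_three_eq (h7 : 7 ≤ p) : ‖(3:ℚ_[p])‖ = 1 := by
  have : ((3:ℕ) : ℚ_[p]) = (3:ℚ_[p]) := by norm_num
  rw [← this]
  exact norm_nat_of_not_dvd (fun h => by have := Nat.le_of_dvd (by norm_num) h; omega)

lemma nAA22 (h7 : 7 ≤ p) : ‖AA p 2 2‖ ≤ (p:ℝ)^(-1:ℤ) := by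
  rw [AA_I6]
  exact nmax (nAA40 h7) (nmul1 norm_p_le norm_EE_le_one)

lemma nAA13 (h7 : 7 ≤ p) : ‖AA p 1 3‖ ≤ (p:ℝ)^(-1:ℤ) := by
  have h : AA p 1 3 = (p:ℚ_[p]) * AA p 2 3 - AA p 2 2 := by
    linear_combination AA_I5 (p := p)
  rw [h]
  exact nmax' (nmul1 norm_p_le (norm_AA_le_one _ _)) (nAA22 h7)

lemma nAA30 (h7 : 7 ≤ p) : ‖AA p 3 0‖ ≤ (p:ℝ)^(-2:ℤ) := by
  have h2 : ‖AA p 3 0‖ = ‖(2:ℚ_[p]) * AA p 3 0‖ := by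
    rw [norm_mul, norm_two_eq h7, one_mul]
  rw [h2, AA_I4]
  refine nmax (nmax' ?_ ?_) ?_
  · have : (-2:ℤ) = -1 + -1 := by norm_num
    rw [this]
    refine nmul ?_ (nAA13 h7)
    rw [norm_mul, norm_three_eq h7, one_mul]
    exact norm_p_le
  · refine nmul1 ?_ (norm_AA_le_one _ _)
    rw [norm_mul, norm_three_eq h7, one_mul]
    exact (norm_p_pow 2).le
  · refine le_trans (nmul1 (norm_p_pow 3).le (norm_AA_le_one _ _)) (pw_mono (by norm_num))

lemma nAA31 (h7 : 7 ≤ p) : ‖AA p 3 1‖ ≤ (p:ℝ)^(-1:ℤ) := by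
  have h : AA p 3 1 = (p:ℚ_[p]) * AA p 4 1 - AA p 4 0 := by
    linear_combination AA_I3 (p := p)
  rw [h]
  exact nmax' (nmul1 norm_p_le (norm_AA_le_one _ _)) (nAA40 h7)

lemma nAA21 (h7 : 7 ≤ p) : ‖AA p 2 1‖ ≤ (p:ℝ)^(-2:ℤ) := by
  have h : AA p 2 1 = (p:ℚ_[p]) * AA p 3 1 - AA p 3 0 := by
    linear_combination AA_I2 (p := p)
  rw [h]
  refine nmax' ?_ (nAA30 h7)
  have : (-2:ℤ) = -1 + -1 := by norm_num
  rw [this]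
  exact nmul norm_p_le (nAA31 h7)

lemma nAA11 (h7 : 7 ≤ p) : ‖AA p 1 1‖ ≤ (p:ℝ)^(-1:ℤ) := by
  have h : AA p 1 1 = (p:ℚ_[p]) * AA p 2 1 - AA p 2 0 := by
    linear_combination AA_I1 (p := p)
  rw [h]
  refine nmax' (le_trans ?_ (pw_mono (by norm_num : (-3:ℤ) ≤ -1))) (nAA20 h7)
  have : (-3:ℤ) = -1 + -2 := by norm_num
  rw [this]
  exact nmul norm_p_le (nAA21 h7)

end C6

section C7
variable {p : ℕ} [hp : Fact p.Prime]

lemma aux7 : ∀ v, 1 ≤ v → v + 2 ≤ 7^v := by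
  intro v hv
  induction v with
  | zero => omega
  | succ n ih =>
    rcases Nat.eq_zero_or_pos n with rfl | hn
    · norm_num
    · have h1 := ih hn
      have h2 : 1 ≤ 7^n := Nat.one_le_pow _ _ (by norm_num)
      calc n + 1 + 2 ≤ 2 * (n + 2) := by omega
        _ ≤ 2 * 7^n := by omega
        _ ≤ 7 * 7^n := by omega
        _ = 7^(n+1) := by rw [pow_succ]; ring

lemma norm_pm_div (h7 : 7 ≤ p) {m : ℕ} (hm : 2 ≤ m) :
    ‖(p:ℚ_[p])^m / (m:ℚ_[p])‖ ≤ (p:ℝ)^(-2:ℤ) := by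
  have hm0 : m ≠ 0 := by omega
  set v := m.factorization p with hv
  have hdecomp : p ^ v * (m / p ^ v) = m := Nat.ordProj_mul_ordCompl_eq_self m p
  have hndvd : ¬ p ∣ (m / p ^ v) := Nat.not_dvd_ordCompl hp.out hm0
  have hnorm_m : ‖(m:ℚ_[p])‖ = (p:ℝ)^(-(v:ℤ)) := by
    rw [← hdecomp]
    push_cast
    rw [norm_mul, norm_p_pow, norm_nat_of_not_dvd hndvd, mul_one]
  have hv2 : v + 2 ≤ m := by
    rcases Nat.eq_zero_or_pos v with h0 | h1
    · omega
    · have h2 : v + 2 ≤ 7^v := aux7 v h1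
      have h3 : 7^v ≤ p^v := Nat.pow_le_pow_left h7 v
      have h4 : p^v ≤ m := Nat.ordProj_le p hm0
      omega
  rw [norm_div, norm_p_pow, hnorm_m]
  rw [div_eq_mul_inv, ← zpow_neg, pw_mul]
  exact pw_mono (by omega)

lemma norm_rat_cast_one (q : ℚ) : ((q:ℚ_[p]) : ℚ_[p]) = (q : ℚ_[p]) := rfl

lemma bern_step {k : ℕ} (hk : 1 ≤ k) :
    (p:ℚ_[p]) * (bernoulli k : ℚ_[p]) =
      ((∑ i ∈ range p, (i:ℤ)^k : ℤ) : ℚ_[p])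
      - ∑ j ∈ range k, (bernoulli j : ℚ_[p]) * ((k+1).choose j : ℚ_[p])
          * (p:ℚ_[p])^(k+1-j) / ((k:ℚ_[p])+1) := by
  have h := _root_.sum_range_pow p k
  have h2 := congrArg (fun q : ℚ => (q : ℚ_[p])) h
  push_cast at h2
  rw [Finset.sum_range_succ] at h2
  have hk1 : ((k:ℚ_[p]) + 1) ≠ 0 := by
    exact_mod_cast Nat.cast_add_one_ne_zero (R := ℚ_[p]) k
  have hterm : (bernoulli k : ℚ_[p]) * ((k+1).choose k : ℚ_[p]) * (p:ℚ_[p])^(k+1-k)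
      / ((k:ℚ_[p])+1) = (p:ℚ_[p]) * (bernoulli k : ℚ_[p]) := by
    rw [Nat.choose_succ_self_right, show k+1-k = 1 from by omega, pow_one]
    push_cast
    field_simp
  rw [hterm] at h2
  have h3 : ((∑ i ∈ range p, (i:ℤ)^k : ℤ) : ℚ_[p]) = ∑ i ∈ range p, (i:ℚ_[p])^k := by
    push_cast
    rfl
  rw [h3]
  linear_combination -h2

lemma choose_ratio {k j : ℕ} (hj : j < k) :
    ((k+1).choose j : ℚ_[p]) * ((k+1-j : ℕ) : ℚ_[p]) = ((k:ℚ_[p])+1) * (k.choose j : ℚ_[p]) := by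
  have e1 : ((k+1).choose j : ℚ_[p]) = ((k+1).factorial : ℚ_[p])
      / ((j.factorial : ℚ_[p]) * ((k+1-j).factorial : ℚ_[p])) := by
    rw [Nat.cast_choose ℚ_[p] (by omega : j ≤ k+1)]
  have e2 : (k.choose j : ℚ_[p]) = (k.factorial : ℚ_[p])
      / ((j.factorial : ℚ_[p]) * ((k-j).factorial : ℚ_[p])) := by
    rw [Nat.cast_choose ℚ_[p] (by omega : j ≤ k)]
  have e3 : (k+1).factorial = (k+1) * k.factorial := Nat.factorial_succ k
  have e4 : (k+1-j).factorial = (k+1-j) * (k-j).factorial := by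
    rw [show k+1-j = (k-j)+1 from by omega, Nat.factorial_succ]
  have hfj : (j.factorial : ℚ_[p]) ≠ 0 := Nat.cast_ne_zero.mpr j.factorial_ne_zero
  have hfkj : ((k-j).factorial : ℚ_[p]) ≠ 0 := Nat.cast_ne_zero.mpr (k-j).factorial_ne_zero
  have hfkj1 : ((k+1-j).factorial : ℚ_[p]) ≠ 0 := Nat.cast_ne_zero.mpr (k+1-j).factorial_ne_zero
  have h5 : ((k+1-j:ℕ) : ℚ_[p]) ≠ 0 := Nat.cast_ne_zero.mpr (by omega)
  rw [e1, e2, e3, e4]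
  push_cast at h5 ⊢
  field_simp

lemma bern_term_bound (h7 : 7 ≤ p) {k j : ℕ} (hj : j < k)
    (hB : ‖(bernoulli j : ℚ_[p])‖ ≤ (p:ℝ)^(1:ℤ)) :
    ‖(bernoulli j : ℚ_[p]) * ((k+1).choose j : ℚ_[p]) * (p:ℚ_[p])^(k+1-j) / ((k:ℚ_[p])+1)‖
      ≤ (p:ℝ)^(-1:ℤ) := by
  have hm : 2 ≤ k+1-j := by omega
  have hm0 : ((k+1-j : ℕ) : ℚ_[p]) ≠ 0 := Nat.cast_ne_zero.mpr (by omega)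
  have hk1 : ((k:ℚ_[p]) + 1) ≠ 0 := Nat.cast_add_one_ne_zero (R := ℚ_[p]) k
  have heq : (bernoulli j : ℚ_[p]) * ((k+1).choose j : ℚ_[p]) * (p:ℚ_[p])^(k+1-j) / ((k:ℚ_[p])+1)
      = (bernoulli j : ℚ_[p]) * (k.choose j : ℚ_[p])
        * ((p:ℚ_[p])^(k+1-j) / ((k+1-j : ℕ) : ℚ_[p])) := by
    have hc := choose_ratio (p := p) hj
    field_simp
    linear_combination (bernoulli j : ℚ_[p]) * (p:ℚ_[p])^(k+1-j) * hc
  rw [heq]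
  have h1 : ‖(bernoulli j : ℚ_[p]) * (k.choose j : ℚ_[p])‖ ≤ (p:ℝ)^(1:ℤ) :=
    nmul1 hB (norm_nat_le _)
  have := nmul h1 (norm_pm_div h7 hm)
  norm_num at this ⊢
  exact this

lemma bern_norm_le (h7 : 7 ≤ p) : ∀ k, ‖(bernoulli k : ℚ_[p])‖ ≤ (p:ℝ)^(1:ℤ) := by
  intro k
  induction k using Nat.strong_induction_on with
  | _ k ih =>
    rcases Nat.eq_zero_or_pos k with rfl | hk
    · rw [bernoulli_zero]
      have h1 : ‖((1:ℚ) : ℚ_[p])‖ = 1 := by norm_num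
      rw [h1, zpow_one]
      exact_mod_cast hp.out.one_lt.le
    · have hstep := bern_step (p := p) hk
      have hX : ‖((∑ i ∈ range p, (i:ℤ)^k : ℤ) : ℚ_[p])‖ ≤ 1 := Padic.norm_int_le_one _
      have hY : ‖∑ j ∈ range k, (bernoulli j : ℚ_[p]) * ((k+1).choose j : ℚ_[p])
          * (p:ℚ_[p])^(k+1-j) / ((k:ℚ_[p])+1)‖ ≤ 1 := by
        refine psum_le _ _ zero_le_one (fun j hj => ?_)
        simp only [mem_range] at hj
        refine le_trans (bern_term_bound h7 hj (ih j hj)) ?_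
        calc (p:ℝ)^(-1:ℤ) ≤ (p:ℝ)^(0:ℤ) := pw_mono (by norm_num)
          _ = 1 := by norm_num
      have hPB : ‖(p:ℚ_[p]) * (bernoulli k : ℚ_[p])‖ ≤ 1 := by
        rw [hstep]; exact nmax' hX hY
      rw [norm_mul, Padic.norm_p] at hPB
      have hppos : (0:ℝ) < (p:ℝ) := by exact_mod_cast hp.out.pos
      rw [zpow_one]
      calc ‖(bernoulli k : ℚ_[p])‖ = (p:ℝ) * ((p:ℝ)⁻¹ * ‖(bernoulli k : ℚ_[p])‖) := by
            field_simp
        _ ≤ (p:ℝ) * 1 := by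
            exact mul_le_mul_of_nonneg_left hPB hppos.le
        _ = (p:ℝ) := mul_one _

lemma bern_norm_le_one (h7 : 7 ≤ p) {k : ℕ} (hk : ¬ (p-1) ∣ k) :
    ‖(bernoulli k : ℚ_[p])‖ ≤ 1 := by
  have hk0 : 1 ≤ k := by
    rcases Nat.eq_zero_or_pos k with rfl | h
    · exact absurd (dvd_zero _) hk
    · exact h
  have hstep := bern_step (p := p) hk0
  have hX : ‖((∑ i ∈ range p, (i:ℤ)^k : ℤ) : ℚ_[p])‖ ≤ (p:ℝ)^(-1:ℤ) := by
    have hdvd : ((p:ℤ)^1) ∣ (∑ i ∈ range p, (i:ℤ)^k) := by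
      rw [pow_one]; exact dvd_sum_range_pow hk
    have := (Padic.norm_int_le_pow_iff_dvd (∑ i ∈ range p, (i:ℤ)^k) 1).mpr hdvd
    exact_mod_cast this
  have hY : ‖∑ j ∈ range k, (bernoulli j : ℚ_[p]) * ((k+1).choose j : ℚ_[p])
      * (p:ℚ_[p])^(k+1-j) / ((k:ℚ_[p])+1)‖ ≤ (p:ℝ)^(-1:ℤ) := by
    refine psum_le _ _ (pw_pos _).le (fun j hj => ?_)
    simp only [mem_range] at hj
    exact bern_term_bound h7 hj (bern_norm_le h7 j)
  have hPB : ‖(p:ℚ_[p]) * (bernoulli k : ℚ_[p])‖ ≤ (p:ℝ)^(-1:ℤ) := by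
    rw [hstep]; exact nmax' hX hY
  rw [norm_mul, Padic.norm_p] at hPB
  have hppos : (0:ℝ) < (p:ℝ) := by exact_mod_cast hp.out.pos
  calc ‖(bernoulli k : ℚ_[p])‖ = (p:ℝ) * ((p:ℝ)⁻¹ * ‖(bernoulli k : ℚ_[p])‖) := by field_simp
    _ ≤ (p:ℝ) * (p:ℝ)^(-1:ℤ) := mul_le_mul_of_nonneg_left hPB hppos.le
    _ = 1 := by
        rw [zpow_neg, zpow_one]
        field_simp

end C7

section C8
variable {p : ℕ} [hp : Fact p.Prime]

lemma pq_e (h7 : 7 ≤ p) : p ^ 2 * (p - 1) + p ^ 2 = p ^ 3 := by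
  have h1 : p ^ 2 * (p - 1) + p ^ 2 = p ^ 2 * ((p - 1) + 1) := by ring
  have h2 : p - 1 + 1 = p := by omega
  rw [h1, h2]
  ring

lemma pq1 (h7 : 7 ≤ p) : p^2 * (p-1) = p^3 - p^2 := Nat.eq_sub_of_add_eq (pq_e h7)

lemma pbig (h7 : 7 ≤ p) : 49 ≤ p^3 - p^2 := by
  have h1 : 49 ≤ p ^ 2 := by
    calc 49 = 7 * 7 := by norm_num
      _ ≤ p * p := Nat.mul_le_mul h7 h7
      _ = p ^ 2 := by ring
  have h2 : 6 ≤ p - 1 := by omega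
  have h3 : 49 * 1 ≤ p ^ 2 * (p - 1) := Nat.mul_le_mul h1 (by omega)
  have := pq1 h7
  omega

lemma euler_dvd (h7 : 7 ≤ p) {i : ℕ} (h1 : 1 ≤ i) (h2 : i < p) :
    ((p:ℤ)^3) ∣ ((i:ℤ)^(p^3-p^2) - 1) := by
  have hndvd : ¬ p ∣ i := fun h => by have := Nat.le_of_dvd (by omega) h; omega
  have hco : Nat.Coprime i (p^3) :=
    Nat.Coprime.pow_right 3 ((hp.out.coprime_iff_not_dvd.mpr hndvd).symm)
  haveI : NeZero (p^3) := ⟨pow_ne_zero 3 hp.out.ne_zero⟩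
  have htot : Nat.totient (p^3) = p^3 - p^2 := by
    rw [Nat.totient_prime_pow hp.out (by norm_num : 0 < 3)]
    have := pq1 h7
    simpa using this
  have hu := ZMod.pow_totient (ZMod.unitOfCoprime i hco)
  have hu2 : ((i : ZMod (p^3)))^(p^3-p^2) = 1 := by
    rw [← htot]
    have := congrArg (Units.val) hu
    rw [Units.val_pow_eq_pow_val, ZMod.coe_unitOfCoprime] at this
    simpa using this
  have hz : (((i:ℤ)^(p^3-p^2) - 1 : ℤ) : ZMod (p^3)) = 0 := by
    push_cast
    rw [hu2]
    ring
  rw [ZMod.intCast_zmod_eq_zero_iff_dvd] at hz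
  exact_mod_cast hz

lemma euler_norm (h7 : 7 ≤ p) {i : ℕ} (h1 : 1 ≤ i) (h2 : i < p) :
    ‖(i:ℚ_[p])^(p^3-p^2) - 1‖ ≤ (p:ℝ)^(-3:ℤ) := by
  have hcast : (i:ℚ_[p])^(p^3-p^2) - 1 = (((i:ℤ)^(p^3-p^2) - 1 : ℤ) : ℚ_[p]) := by
    push_cast
    ring
  rw [hcast]
  have := (Padic.norm_int_le_pow_iff_dvd ((i:ℤ)^(p^3-p^2) - 1) 3).mpr (euler_dvd h7 h1 h2)
  exact_mod_cast this

lemma S2_vs_powsum (h7 : 7 ≤ p) :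
    ‖AA p 2 0 - ∑ i ∈ range p, (i:ℚ_[p])^(p^3-p^2-2)‖ ≤ (p:ℝ)^(-3:ℤ) := by
  have hbig := pbig h7
  have hr0 : p^3-p^2-2 ≠ 0 := by omega
  have hr2 : (p^3-p^2-2) + 2 = p^3-p^2 := by omega
  rw [range_eq_Ico, Finset.sum_eq_sum_Ico_succ_bot hp.out.pos,
    Nat.cast_zero, zero_pow hr0, zero_add, AA, ← sum_sub_distrib]
  refine psum_le _ _ (pw_pos _).le (fun i hi => ?_)
  simp only [mem_Ico] at hi
  have hu : ((i:ℚ_[p])) ≠ 0 := cast_mem_ne hi.1 hi.2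
  have hxnorm : ‖xx p i‖ = 1 := norm_xx hi.1 hi.2
  have hkey : xx p i ^ 2 * yy p i ^ 0 - (i:ℚ_[p])^(p^3-p^2-2)
      = -(xx p i ^ 2 * ((i:ℚ_[p])^(p^3-p^2) - 1)) := by
    rw [pow_zero, mul_one, ← hr2, pow_add, xx]
    field_simp
    rw [Nat.add_sub_cancel]
    ring
  rw [hkey, norm_neg, norm_mul, norm_pow, hxnorm, one_pow, one_mul]
  exact euler_norm h7 hi.1 hi.2

lemma r_even (h7 : 7 ≤ p) : (p^3-p^2-2) % 2 = 0 := by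
  have hodd : Odd p := hp.out.odd_of_ne_two (by omega)
  obtain ⟨a, ha⟩ : Odd (p^3) := hodd.pow
  obtain ⟨b, hb⟩ : Odd (p^2) := hodd.pow
  have := pbig h7
  omega

lemma powsum_vs_pBr (h7 : 7 ≤ p) :
    ‖(∑ i ∈ range p, (i:ℚ_[p])^(p^3-p^2-2))
      - (p:ℚ_[p]) * (bernoulli (p^3-p^2-2) : ℚ_[p])‖ ≤ (p:ℝ)^(-3:ℤ) := by
  have hbig := pbig h7
  set r := p^3-p^2-2 with hr
  have hr1 : 1 ≤ r := by omega
  have hstep := bern_step (p := p) hr1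
  have h3 : ((∑ i ∈ range p, (i:ℤ)^r : ℤ) : ℚ_[p]) = ∑ i ∈ range p, (i:ℚ_[p])^r := by
    push_cast; rfl
  rw [h3] at hstep
  have hY : (∑ i ∈ range p, (i:ℚ_[p])^r) - (p:ℚ_[p]) * (bernoulli r : ℚ_[p])
      = ∑ j ∈ range r, (bernoulli j : ℚ_[p]) * ((r+1).choose j : ℚ_[p])
          * (p:ℚ_[p])^(r+1-j) / ((r:ℚ_[p])+1) := by
    linear_combination -hstep
  rw [hY]
  -- now bound each term
  have hrp1 : ¬ p ∣ (r + 1) := by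
    intro hd
    have hd2 : p ∣ p^3 - p^2 := by
      rw [← pq1 h7]
      exact ⟨p*(p-1), by ring⟩
    have : p ∣ 1 := by
      have e : (p^3 - p^2) - (r + 1) = 1 := by omega
      have := Nat.dvd_sub hd2 hd
      rwa [e] at this
    have := Nat.le_of_dvd (by norm_num) this
    omega
  have hnr1 : ‖((r:ℚ_[p])+1)‖ = 1 := by
    have : ((r:ℚ_[p])+1) = ((r+1 : ℕ) : ℚ_[p]) := by push_cast; ring
    rw [this]
    exact norm_nat_of_not_dvd hrp1
  refine psum_le _ _ (pw_pos _).le (fun j hj => ?_)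
  simp only [mem_range] at hj
  have hterm_norm : ‖(bernoulli j : ℚ_[p]) * ((r+1).choose j : ℚ_[p])
      * (p:ℚ_[p])^(r+1-j) / ((r:ℚ_[p])+1)‖
      = ‖(bernoulli j : ℚ_[p])‖ * ‖((r+1).choose j : ℚ_[p])‖ * (p:ℝ)^(-((r+1-j:ℕ):ℤ)) := by
    rw [norm_div, hnr1, div_one, norm_mul, norm_mul, norm_p_pow]
  rcases eq_or_ne j (r-1) with rfl | hj1
  · -- bernoulli (r-1) = 0
    have hodd : Odd (r-1) := by
      have := r_even h7
      have h2 : (r - 1) % 2 = 1 := by omega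
      exact Nat.odd_iff.mpr h2
    have hz : bernoulli (r-1) = 0 := by
      rw [bernoulli_eq_bernoulli'_of_ne_one (by omega)]
      exact bernoulli'_eq_zero_of_odd hodd (by omega)
    rw [hz]
    simp only [Rat.cast_zero, zero_mul, zero_div, norm_zero]
    exact (pw_pos _).le
  rcases eq_or_ne j (r-2) with rfl | hj2
  · -- j = r-2 : use bern_norm_le_one
    have hnd : ¬ (p-1) ∣ (r-2) := by
      intro hd
      have hd2 : (p-1) ∣ (p^3 - p^2) := by
        rw [← pq1 h7]
        exact dvd_mul_left _ _
      have e : (p^3 - p^2) - (r - 2) = 4 := by omega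
      have := Nat.dvd_sub hd2 hd
      rw [e] at this
      have := Nat.le_of_dvd (by norm_num) this
      omega
    have hB := bern_norm_le_one h7 hnd
    rw [hterm_norm]
    have he : r + 1 - (r - 2) = 3 := by omega
    rw [he]
    calc ‖(bernoulli (r-2) : ℚ_[p])‖ * ‖(((r+1).choose (r-2)) : ℚ_[p])‖ * (p:ℝ)^(-((3:ℕ):ℤ))
        ≤ 1 * 1 * (p:ℝ)^(-((3:ℕ):ℤ)) := by
          refine mul_le_mul (by
            refine mul_le_mul hB (norm_nat_le _) (norm_nonneg _) zero_le_one) le_rfl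
            (pw_pos _).le (by norm_num)
      _ = (p:ℝ)^(-3:ℤ) := by norm_num
  · -- j ≤ r - 3
    have hj3 : j ≤ r - 3 := by omega
    have hB := bern_norm_le h7 j
    rw [hterm_norm]
    have he4 : (4:ℤ) ≤ ((r+1-j:ℕ):ℤ) := by
      have : 4 ≤ r + 1 - j := by omega
      exact_mod_cast this
    calc ‖(bernoulli j : ℚ_[p])‖ * ‖(((r+1).choose j) : ℚ_[p])‖ * (p:ℝ)^(-((r+1-j:ℕ):ℤ))
        ≤ (p:ℝ)^(1:ℤ) * 1 * (p:ℝ)^(-4:ℤ) := by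
          refine mul_le_mul (mul_le_mul hB (norm_nat_le _) (norm_nonneg _) (pw_pos _).le)
            (pw_mono (by omega)) (pw_pos _).le ?_
          positivity
      _ ≤ (p:ℝ)^(-3:ℤ) := by
          rw [mul_one, pw_mul]
          exact pw_mono (by norm_num)

end C8

section C9
variable {p : ℕ} [hp : Fact p.Prime]

lemma spair (h7 : 7 ≤ p) (f : ℕ → ℚ_[p]) :
    ∑ i ∈ Ico 1 p, f i = ∑ i ∈ Ico 1 (p/2+1), (f i + f (p - i)) := by
  have hodd : p % 2 = 1 := Nat.odd_iff.mp (hp.out.odd_of_ne_two (by omega))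
  rw [sum_add_distrib]
  have hsplit : Ico 1 p = Ico 1 (p/2+1) ∪ Ico (p/2+1) p :=
    (Finset.Ico_union_Ico_eq_Ico (by omega) (by omega)).symm
  rw [hsplit, Finset.sum_union (Finset.Ico_disjoint_Ico_consecutive _ _ _)]
  congr 1
  refine (Finset.sum_nbij' (fun i => p - i) (fun i => p - i) ?_ ?_ ?_ ?_ ?_).symm <;>
    intros i hi <;> simp only [mem_Ico] at * <;> omega

lemma ppair (h7 : 7 ≤ p) (f : ℕ → ℚ_[p]) :
    ∏ i ∈ Ico 1 p, f i = ∏ i ∈ Ico 1 (p/2+1), (f i * f (p - i)) := by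
  have hodd : p % 2 = 1 := Nat.odd_iff.mp (hp.out.odd_of_ne_two (by omega))
  rw [Finset.prod_mul_distrib]
  have hsplit : Ico 1 p = Ico 1 (p/2+1) ∪ Ico (p/2+1) p :=
    (Finset.Ico_union_Ico_eq_Ico (by omega) (by omega)).symm
  rw [hsplit, Finset.prod_union (Finset.Ico_disjoint_Ico_consecutive _ _ _)]
  congr 1
  refine (Finset.prod_nbij' (fun i => p - i) (fun i => p - i) ?_ ?_ ?_ ?_ ?_).symm <;>
    intros i hi <;> simp only [mem_Ico] at * <;> omega

lemma prod_shift (h7 : 7 ≤ p) : (∏ i ∈ Ico 1 p, (p + i)) = ∏ i ∈ Ico (p+1) (2*p), i := by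
  refine Finset.prod_nbij' (fun i => p + i) (fun j => j - p) ?_ ?_ ?_ ?_ ?_ <;>
    intros i hi <;> simp only [mem_Ico] at * <;> omega

lemma choose_eq_prod (h7 : 7 ≤ p) :
    (((2*p-1).choose (p-1) : ℕ) : ℚ_[p]) = ∏ i ∈ Ico 1 p, (1 + (p:ℚ_[p]) * xx p i) := by
  have hfact : (2*p-1).choose (p-1) * (p-1).factorial * p.factorial = (2*p-1).factorial := by
    have h := Nat.choose_mul_factorial_mul_factorial (show p-1 ≤ 2*p-1 by omega)
    rwa [show 2*p-1-(p-1) = p from by omega] at h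
  have hprod : (∏ i ∈ Ico 1 p, (p + i)) * p.factorial = (2*p-1).factorial := by
    rw [prod_shift h7]
    have h1 : (∏ i ∈ Ico 1 (p+1), i) = p.factorial := Finset.prod_Ico_id_eq_factorial p
    have h2 : (∏ i ∈ Ico 1 (2*p), i) = (2*p-1).factorial := by
      rw [show 2*p = (2*p-1)+1 from by omega]
      exact Finset.prod_Ico_id_eq_factorial (2*p-1)
    have h3 := Finset.prod_Ico_consecutive (id : ℕ → ℕ)
      (show 1 ≤ p+1 by omega) (show p+1 ≤ 2*p by omega)
    simp only [id] at h3
    rw [mul_comm, ← h2, ← h3, h1]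
  have hIco : (∏ i ∈ Ico 1 p, (i:ℚ_[p])) = ((p-1).factorial : ℚ_[p]) := by
    have : (∏ i ∈ Ico 1 p, i) = (p-1).factorial := by
      conv_lhs => rw [show p = (p-1)+1 from by omega]
      exact Finset.prod_Ico_id_eq_factorial (p-1)
    rw [← this]
    push_cast
    rfl
  have h2 : (∏ i ∈ Ico 1 p, ((p:ℚ_[p]) + i))
      = (∏ i ∈ Ico 1 p, (1 + (p:ℚ_[p]) * xx p i)) * (∏ i ∈ Ico 1 p, (i:ℚ_[p])) := by
    rw [← Finset.prod_mul_distrib]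
    refine Finset.prod_congr rfl fun i hi => ?_
    simp only [mem_Ico] at hi
    have hu := cast_mem_ne (p := p) hi.1 hi.2
    rw [xx]
    field_simp
    ring
  have hcast1 : (∏ i ∈ Ico 1 p, ((p:ℚ_[p]) + i)) = ((∏ i ∈ Ico 1 p, (p + i) : ℕ) : ℚ_[p]) := by
    push_cast
    rfl
  have hf1 : ((p-1).factorial : ℚ_[p]) ≠ 0 := Nat.cast_ne_zero.mpr (p-1).factorial_ne_zero
  have hf2 : (p.factorial : ℚ_[p]) ≠ 0 := Nat.cast_ne_zero.mpr p.factorial_ne_zero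
  have hcc := congrArg (fun n : ℕ => (n : ℚ_[p])) (hfact.trans hprod.symm)
  push_cast at hcc
  -- hcc : choose * (p-1)! * p! = (∏ (p+i)) * p!
  rw [hcast1, hIco] at h2
  have hthis := mul_right_cancel₀ hf2 hcc
  rw [hcast1, h2] at hthis
  exact mul_right_cancel₀ hf1 hthis

lemma prod_approx (h7 : 7 ≤ p) {ι : Type*} (s : Finset ι) (c : ι → ℚ_[p]) {ε : ℝ}
    (hε0 : 0 ≤ ε) (hε1 : ε ≤ 1) (hc : ∀ i ∈ s, ‖c i‖ ≤ ε) :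
    ‖∏ i ∈ s, (1 + c i) - 1 - (∑ i ∈ s, c i)
      - ((∑ i ∈ s, c i)^2 - ∑ i ∈ s, (c i)^2)/2‖ ≤ ε^3 := by
  classical
  induction s using Finset.induction_on with
  | empty => simp [pow_nonneg hε0]
  | @insert a s ha ih =>
    have hca : ‖c a‖ ≤ ε := hc a (mem_insert_self a s)
    have hcs : ∀ i ∈ s, ‖c i‖ ≤ ε := fun i hi => hc i (mem_insert_of_mem hi)
    have hσ : ‖∑ i ∈ s, c i‖ ≤ ε := psum_le _ _ hε0 hcs
    have hq : ‖∑ i ∈ s, (c i)^2‖ ≤ ε^2 := by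
      refine psum_le _ _ (by positivity) (fun i hi => ?_)
      rw [norm_pow]
      exact pow_le_pow_left₀ (norm_nonneg _) (hcs i hi) 2
    have hkey : ∏ i ∈ insert a s, (1 + c i) - 1 - (∑ i ∈ insert a s, c i)
        - ((∑ i ∈ insert a s, c i)^2 - ∑ i ∈ insert a s, (c i)^2)/2
        = (1 + c a) * (∏ i ∈ s, (1 + c i) - 1 - (∑ i ∈ s, c i)
            - ((∑ i ∈ s, c i)^2 - ∑ i ∈ s, (c i)^2)/2)
          + c a * ((∑ i ∈ s, c i)^2 - ∑ i ∈ s, (c i)^2)/2 := by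
      rw [Finset.prod_insert ha, Finset.sum_insert ha, Finset.sum_insert ha]
      ring
    rw [hkey]
    refine nmax ?_ ?_
    · have h1a : ‖1 + c a‖ ≤ 1 := nmax (by norm_num) (le_trans hca hε1)
      calc ‖(1 + c a) * (∏ i ∈ s, (1 + c i) - 1 - (∑ i ∈ s, c i)
            - ((∑ i ∈ s, c i)^2 - ∑ i ∈ s, (c i)^2)/2)‖
          = ‖1 + c a‖ * ‖∏ i ∈ s, (1 + c i) - 1 - (∑ i ∈ s, c i)
            - ((∑ i ∈ s, c i)^2 - ∑ i ∈ s, (c i)^2)/2‖ := norm_mul _ _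
        _ ≤ 1 * ε^3 := mul_le_mul h1a (ih hcs) (norm_nonneg _) zero_le_one
        _ = ε^3 := one_mul _
    · have hd : ‖((∑ i ∈ s, c i)^2 - ∑ i ∈ s, (c i)^2)‖ ≤ ε^2 := by
        refine nmax' ?_ hq
        rw [norm_pow]
        exact pow_le_pow_left₀ (norm_nonneg _) hσ 2
      calc ‖c a * ((∑ i ∈ s, c i)^2 - ∑ i ∈ s, (c i)^2)/2‖
          = ‖c a‖ * ‖(∑ i ∈ s, c i)^2 - ∑ i ∈ s, (c i)^2‖ / ‖(2:ℚ_[p])‖ := by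
            rw [norm_div, norm_mul]
        _ = ‖c a‖ * ‖(∑ i ∈ s, c i)^2 - ∑ i ∈ s, (c i)^2‖ := by
            rw [norm_two_eq h7, div_one]
        _ ≤ ε * ε^2 := mul_le_mul hca hd (norm_nonneg _) hε0
        _ = ε^3 := by ring

end C9

section C10
variable {p : ℕ} [hp : Fact p.Prime]

lemma pair_to_half (h7 : 7 ≤ p) :
    ∏ i ∈ Ico 1 p, (1 + (p:ℚ_[p]) * xx p i)
      = ∏ i ∈ Ico 1 (p/2+1), (1 + 2*(p:ℚ_[p])^2 * (xx p i * yy p i)) := by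
  rw [ppair h7]
  refine Finset.prod_congr rfl fun i hi => ?_
  simp only [mem_Ico] at hi
  have hi2 : i < p := by omega
  have hu := cast_mem_ne (p := p) hi.1 hi2
  have hv := cast_sub_ne (p := p) hi.1 hi2
  have e2 : xx p (p - i) = yy p i := rfl
  rw [e2, xx, yy_eq (by omega : i ≤ p)]
  field_simp
  ring

lemma sigma_eq (h7 : 7 ≤ p) :
    (∑ i ∈ Ico 1 (p/2+1), 2*(p:ℚ_[p])^2 * (xx p i * yy p i)) = (p:ℚ_[p])^2 * AA p 1 1 := by
  have h0 : AA p 1 1 = ∑ i ∈ Ico 1 (p/2+1), (xx p i * yy p i + xx p (p-i) * yy p (p-i)) := by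
    rw [AA]
    simp only [pow_one]
    exact spair h7 (fun j => xx p j * yy p j)
  have h1 : ∀ i ∈ Ico 1 (p/2+1), xx p (p-i) * yy p (p-i) = xx p i * yy p i := by
    intro i hi
    simp only [mem_Ico] at hi
    have e1 : yy p (p-i) = xx p i := by
      rw [yy]
      congr 1
      omega
    have e2 : xx p (p-i) = yy p i := rfl
    rw [e1, e2]
    ring
  have h0' : AA p 1 1 = ∑ i ∈ Ico 1 (p/2+1), (xx p i * yy p i + xx p i * yy p i) := by
    rw [h0]
    exact Finset.sum_congr rfl (fun i hi => by rw [h1 i hi])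
  rw [h0', mul_sum]
  refine Finset.sum_congr rfl fun i hi => ?_
  ring

lemma qq_eq (h7 : 7 ≤ p) :
    (∑ i ∈ Ico 1 (p/2+1), (2*(p:ℚ_[p])^2 * (xx p i * yy p i))^2)
      = 2*(p:ℚ_[p])^4 * AA p 2 2 := by
  have h0 : AA p 2 2 = ∑ i ∈ Ico 1 (p/2+1),
      (xx p i ^2 * yy p i ^2 + xx p (p-i)^2 * yy p (p-i)^2) := by
    rw [AA]
    exact spair h7 (fun j => xx p j ^2 * yy p j ^2)
  have h1 : ∀ i ∈ Ico 1 (p/2+1), xx p (p-i)^2 * yy p (p-i)^2 = xx p i^2 * yy p i^2 := by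
    intro i hi
    simp only [mem_Ico] at hi
    have e1 : yy p (p-i) = xx p i := by
      rw [yy]
      congr 1
      omega
    have e2 : xx p (p-i) = yy p i := rfl
    rw [e1, e2]
    ring
  have h0' : AA p 2 2 = ∑ i ∈ Ico 1 (p/2+1),
      (xx p i ^2 * yy p i ^2 + xx p i ^2 * yy p i ^2) := by
    rw [h0]
    exact Finset.sum_congr rfl (fun i hi => by rw [h1 i hi])
  rw [h0', mul_sum]
  refine Finset.sum_congr rfl fun i hi => ?_
  ring

lemma main_norm (h7 : 7 ≤ p) :
    ‖(((2*p-1).choose (p-1) : ℕ) : ℚ_[p]) - 1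
      + (p:ℚ_[p])^3 * (bernoulli (p^3-p^2-2) : ℚ_[p])‖ ≤ (p:ℝ)^(-5:ℤ) := by
  set B : ℚ_[p] := (bernoulli (p^3-p^2-2) : ℚ_[p]) with hB
  set c : ℕ → ℚ_[p] := fun i => 2*(p:ℚ_[p])^2 * (xx p i * yy p i) with hc
  have hCK : (((2*p-1).choose (p-1) : ℕ) : ℚ_[p]) = ∏ i ∈ Ico 1 (p/2+1), (1 + c i) := by
    rw [choose_eq_prod h7, pair_to_half h7]
  have hcb : ∀ i ∈ Ico 1 (p/2+1), ‖c i‖ ≤ (p:ℝ)^(-2:ℤ) := by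
    intro i hi
    simp only [mem_Ico] at hi
    have hi2 : i < p := by omega
    rw [hc]
    simp only []
    rw [norm_mul, norm_mul, norm_two_eq h7, one_mul, norm_mul,
      norm_xx hi.1 hi2, norm_yy hi.1 hi2, one_mul, mul_one, norm_pow, Padic.norm_p]
    rw [inv_pow, ← zpow_natCast, ← zpow_neg]
    norm_num
  have happrox := prod_approx h7 (Ico 1 (p/2+1)) c (pw_pos (p := p) (-2:ℤ)).le
    (by
      calc (p:ℝ)^(-2:ℤ) ≤ (p:ℝ)^(0:ℤ) := pw_mono (by norm_num)
        _ = 1 := by norm_num) hcb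
  have hε3 : ((p:ℝ)^(-2:ℤ))^3 = (p:ℝ)^(-6:ℤ) := by
    rw [← zpow_natCast ((p:ℝ)^(-2:ℤ)) 3, ← zpow_mul]
    norm_num
  rw [hε3] at happrox
  set S : ℚ_[p] := ∑ i ∈ Ico 1 (p/2+1), c i with hS
  set Q : ℚ_[p] := ∑ i ∈ Ico 1 (p/2+1), (c i)^2 with hQ
  have hσ : S = (p:ℚ_[p])^2 * AA p 1 1 := sigma_eq h7
  have hq : Q = 2*(p:ℚ_[p])^4 * AA p 2 2 := qq_eq h7
  have hkey : (((2*p-1).choose (p-1) : ℕ) : ℚ_[p]) - 1 + (p:ℚ_[p])^3 * B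
      = ((∏ i ∈ Ico 1 (p/2+1), (1 + c i)) - 1 - S - (S^2 - Q)/2)
        + (S^2 - Q)/2
        + ((p:ℚ_[p])^3 * AA p 2 1 - (p:ℚ_[p])^2 * (AA p 2 0 - (p:ℚ_[p]) * B)) := by
    rw [hCK]
    linear_combination hσ + (p:ℚ_[p])^2 * AA_I1 (p := p)
  rw [hkey]
  refine nmax (nmax ?_ ?_) ?_
  · exact le_trans happrox (pw_mono (by norm_num))
  · -- ‖(S²-Q)/2‖ ≤ p^{-5}
    have hSnorm : ‖S‖ ≤ (p:ℝ)^(-3:ℤ) := by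
      rw [hσ]
      have := nmul (p := p) (norm_p_pow 2).le (nAA11 h7)
      norm_num at this ⊢
      exact this
    have hS2 : ‖S^2‖ ≤ (p:ℝ)^(-5:ℤ) := by
      rw [norm_pow]
      calc ‖S‖^2 ≤ ((p:ℝ)^(-3:ℤ))^2 := pow_le_pow_left₀ (norm_nonneg _) hSnorm 2
        _ = (p:ℝ)^(-6:ℤ) := by
            rw [← zpow_natCast ((p:ℝ)^(-3:ℤ)) 2, ← zpow_mul]
            norm_num
        _ ≤ (p:ℝ)^(-5:ℤ) := pw_mono (by norm_num)
    have hQnorm : ‖Q‖ ≤ (p:ℝ)^(-5:ℤ) := by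
      rw [hq, norm_mul, norm_mul, norm_two_eq h7, one_mul]
      have := nmul (p := p) (norm_p_pow 4).le (nAA22 h7)
      rw [norm_mul] at this
      norm_num at this ⊢
      exact this
    calc ‖(S^2 - Q)/2‖ = ‖S^2 - Q‖ / ‖(2:ℚ_[p])‖ := norm_div _ _
      _ = ‖S^2 - Q‖ := by rw [norm_two_eq h7, div_one]
      _ ≤ (p:ℝ)^(-5:ℤ) := nmax' hS2 hQnorm
  · -- ‖p³AA21 - p²(AA20 - pB)‖ ≤ p^{-5}
    refine nmax' ?_ ?_
    · have := nmul (p := p) (norm_p_pow 3).le (nAA21 h7)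
      norm_num at this ⊢
      exact this
    · have hmid : ‖AA p 2 0 - (p:ℚ_[p]) * B‖ ≤ (p:ℝ)^(-3:ℤ) := by
        have h1 := S2_vs_powsum h7
        have h2 := powsum_vs_pBr h7
        have := nmax h1 h2
        rwa [sub_add_sub_cancel] at this
      have := nmul (p := p) (norm_p_pow 2).le hmid
      norm_num at this ⊢
      exact this

end C10
end BB

theorem binom_bernoulli_formula (p : ℕ) (hp : p.Prime) (h7 : 7 ≤ p) :
    ((p : ℤ) ^ 5) ∣
      (((Nat.choose (2 * p - 1) (p - 1) : ℚ))
        - (1 - (p : ℚ) ^ 3 * bernoulli (p ^ 3 - p ^ 2 - 2))).num := by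
  haveI : Fact p.Prime := ⟨hp⟩
  set q0 : ℚ := ((Nat.choose (2 * p - 1) (p - 1) : ℚ))
      - (1 - (p : ℚ) ^ 3 * bernoulli (p ^ 3 - p ^ 2 - 2)) with hq0
  have hcast : ((q0 : ℚ) : ℚ_[p]) = (((2*p-1).choose (p-1) : ℕ) : ℚ_[p]) - 1
      + (p:ℚ_[p])^3 * ((bernoulli (p^3-p^2-2) : ℚ) : ℚ_[p]) := by
    rw [hq0]
    push_cast
    ring
  have hnorm : ‖((q0 : ℚ) : ℚ_[p])‖ ≤ (p:ℝ)^(-5:ℤ) := by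
    rw [hcast]
    exact BB.main_norm h7
  have hnum : ((q0.num : ℤ) : ℚ_[p]) = ((q0 : ℚ) : ℚ_[p]) * ((q0.den : ℕ) : ℚ_[p]) := by
    have h1 : (q0.num : ℚ) = q0 * (q0.den : ℚ) := by
      have hden : ((q0.den : ℚ)) ≠ 0 := by
        exact_mod_cast q0.den_ne_zero
      have h0 := Rat.num_div_den q0
      rw [div_eq_iff hden] at h0
      linarith [h0]
    have h2 := congrArg (fun x : ℚ => (x : ℚ_[p])) h1
    push_cast at h2
    exact h2
  have hnn : ‖((q0.num : ℤ) : ℚ_[p])‖ ≤ (p:ℝ)^(-5:ℤ) := by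
    rw [hnum, norm_mul]
    calc ‖((q0 : ℚ) : ℚ_[p])‖ * ‖((q0.den : ℕ) : ℚ_[p])‖
        ≤ (p:ℝ)^(-5:ℤ) * 1 :=
          mul_le_mul hnorm (BB.norm_nat_le _) (norm_nonneg _) (BB.pw_pos _).le
      _ = (p:ℝ)^(-5:ℤ) := mul_one _
  have hdvd : ((p:ℤ)^5) ∣ q0.num := by
    have := (Padic.norm_int_le_pow_iff_dvd q0.num 5).mp (by exact_mod_cast hnn)
    exact_mod_cast this
  exact hdvd
end
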